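/- arXiv:1603.07217 — 7 statements merged into one kernel-verified Lean document; each statement's English description precedes it below -/
import Mathlib

section
/- If u, v, w are words over an alphabet A with |u| ≤ |w|, then in the queue monoid, the action sequence u followed by reading v followed by reading w is equivalent to reading v, then writing u, then reading w; i.e., u v̄ w̄ ≡ v̄ u w̄, where v̄ denotes the sequence of read actions for v. -/
/-- One-step action of a queue symbol (`Sum.inl a` = write `a`, `Sum.inr a` = read `a`)
on a queue state (`none` = error state ⊥). -/
def qstep (A : Type) [DecidableEq A] : Option (List A) → A ⊕ A → Option (List A)
  | none, _ => none
  | some q, Sum.inl a => some (q ++ [a])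
  | some q, Sum.inr a =>
      match q with
      | [] => none
      | b :: q' => if b = a then some q' else none

/-- Action of a word of queue operations on a queue state. -/
def qact (A : Type) [DecidableEq A] (q : Option (List A)) (u : List (A ⊕ A)) :
    Option (List A) :=
  u.foldl (qstep A) q

/-- Equivalence of action sequences: same effect on every queue state. -/
def QEquiv (A : Type) [DecidableEq A] (u v : List (A ⊕ A)) : Prop :=
  ∀ q : Option (List A), qact A q u = qact A q v

/-- The sequence of write actions of a word. -/
def wr {A : Type} (u : List A) : List (A ⊕ A) := u.map Sum.inl

/-- The sequence of read actions of a word. -/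
def rd {A : Type} (u : List A) : List (A ⊕ A) := u.map Sum.inr

/-!
On a queue `s` with `|v| ≤ |s|`, reading `v` only consumes letters of `s`, so it commutes with
appending `u`. If `|s| < |v|`, the right-hand side fails while reading `v`; the left-hand side has
to read `|v| + |w|` letters from the queue `s ++ u`, which is too short because `|u| ≤ |w|`.
-/

lemma rd_append {A : Type} (v w : List A) : rd (v ++ w) = rd v ++ rd w := List.map_append

section QueueAction

variable (A : Type) [DecidableEq A]

lemma qact_none (u : List (A ⊕ A)) : qact A none u = none := by
  induction u with
  | nil => rfl
  | cons a u ih => simpa [qact, qstep] using ih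

lemma qact_append (q : Option (List A)) (u v : List (A ⊕ A)) :
    qact A q (u ++ v) = qact A (qact A q u) v := List.foldl_append

lemma qact_some_wr (s u : List A) : qact A (some s) (wr u) = some (s ++ u) := by
  induction u generalizing s with
  | nil => simp [qact, wr]
  | cons a u ih =>
    show qact A (qstep A (some s) (Sum.inl a)) (wr u) = _
    simp [qstep, ih]

lemma qact_some_rd (s v : List A) :
    qact A (some s) (rd v) = if v <+: s then some (s.drop v.length) else none := by
  induction v generalizing s with
  | nil => simp [qact, rd]
  | cons a v ih =>
    cases s with
    | nil =>
      show qact A (qstep A (some []) (Sum.inr a)) (rd v) = _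
      simp [qstep, qact_none]
    | cons b s =>
      show qact A (qstep A (some (b :: s)) (Sum.inr a)) (rd v) = _
      by_cases hb : b = a
      · subst hb
        simp [qstep, ih, List.cons_prefix_cons]
      · simp [qstep, hb, qact_none, List.cons_prefix_cons, Ne.symm hb]

lemma qact_some_rd_of_length_lt {s v : List A} (hsv : s.length < v.length) :
    qact A (some s) (rd v) = none := by
  rw [qact_some_rd, if_neg fun hv => absurd hv.length_le (not_le.mpr hsv)]

lemma qact_some_wr_append_rd_of_length_le (u : List A) {s v : List A}
    (hvs : v.length ≤ s.length) :
    qact A (some s) (wr u ++ rd v) = qact A (some s) (rd v ++ wr u) := by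
  rw [qact_append, qact_append, qact_some_wr, qact_some_rd, qact_some_rd]
  by_cases hv : v <+: s
  · rw [if_pos (hv.trans (List.prefix_append s u)), if_pos hv, qact_some_wr,
      List.drop_append_of_le_length hvs]
  · have hvu : ¬ v <+: s ++ u := fun hvu =>
      hv (List.prefix_of_prefix_length_le hvu (List.prefix_append s u) hvs)
    rw [if_neg hvu, if_neg hv, qact_none]

end QueueAction

/-- If `|u| ≤ |w|` then `u v̄ w̄ ≡ v̄ u w̄` in the queue monoid. -/
theorem stmt0 (A : Type) [DecidableEq A] (u v w : List A)
    (h : u.length ≤ w.length) :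
    QEquiv A (wr u ++ rd v ++ rd w) (rd v ++ wr u ++ rd w) := by
  rintro (_ | s)
  · simp only [qact_none]
  by_cases hvs : v.length ≤ s.length
  · rw [qact_append A _ (wr u ++ rd v), qact_append A _ (rd v ++ wr u),
      qact_some_wr_append_rd_of_length_le A u hvs]
  · have hshort : (s ++ u).length < (v ++ w).length := by
      simp only [List.length_append]
      omega
    rw [List.append_assoc, ← rd_append, qact_append, qact_some_wr,
      qact_some_rd_of_length_lt A hshort, qact_append, qact_append,
      qact_some_rd_of_length_lt A (not_le.mp hvs), qact_none, qact_none]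
end

section
/- Let g ∈ A*, h ∈ A⁺ such that p = gh and q = hg are both primitive words. If a word y is a suffix of qⁱ and a prefix of pʲ for some i, j ≥ 1, and |y| ≥ |q|, then y = g qᵏ = pᵏ g where k = ⌊|y|/|q|⌋. -/
/-- `wpow p n` is the `n`-th power `pⁿ` of the word `p`. -/
def wpow {A : Type} (p : List A) (n : ℕ) : List A := (List.replicate n p).flatten

/-- A word is primitive if it is nonempty and not a proper power. -/
def Primitive {A : Type} (p : List A) : Prop :=
  p ≠ [] ∧ ∀ (r : List A) (n : ℕ), p = wpow r n → n = 1

namespace Stmt3Aux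
variable {A : Type}

theorem wpow_zero (p : List A) : wpow p 0 = [] := rfl

theorem wpow_succ (p : List A) (n : ℕ) : wpow p (n+1) = p ++ wpow p n := by
  simp [wpow, List.replicate_succ]

theorem wpow_one (p : List A) : wpow p 1 = p := by simp [wpow_succ, wpow_zero]

theorem wpow_add (p : List A) (m n : ℕ) : wpow p (m+n) = wpow p m ++ wpow p n := by
  induction m with
  | zero => simp [wpow_zero]
  | succ k ih => rw [Nat.succ_add, wpow_succ, wpow_succ, ih, List.append_assoc]

theorem wpow_length (p : List A) (n : ℕ) : (wpow p n).length = n * p.length := by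
  induction n with
  | zero => simp [wpow_zero]
  | succ k ih => rw [wpow_succ]; simp [ih]; ring

theorem wpow_wpow (p : List A) (m n : ℕ) : wpow (wpow p m) n = wpow p (n*m) := by
  induction n with
  | zero => simp [wpow_zero]
  | succ k ih => rw [wpow_succ, ih, Nat.succ_mul, Nat.add_comm, wpow_add]

theorem wpow_conj (g h : List A) (n : ℕ) :
    g ++ wpow (h ++ g) n = wpow (g ++ h) n ++ g := by
  induction n with
  | zero => simp [wpow_zero]
  | succ k ih =>
    rw [wpow_succ, wpow_succ]
    simp only [List.append_assoc]
    rw [ih]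

theorem prefix_of_eq_append {u r q r' : List A} (h : u ++ r = q ++ r')
    (hle : u.length ≤ q.length) : u <+: q := by
  have h1 : (u ++ r).take u.length = u := by simp
  have h2 : (q ++ r').take u.length = q.take u.length :=
    List.take_append_of_le_length hle
  rw [h, h2] at h1
  rw [← h1]
  exact List.take_prefix _ _

theorem suffix_of_eq_append {x y a b : List A} (h : x ++ y = a ++ b)
    (hle : y.length ≤ b.length) : y <:+ b := by
  have hx : a.length ≤ x.length := by
    have h' := congrArg List.length h; simp at h'; omega
  have hb : (x ++ y).drop a.length = x.drop a.length ++ y :=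
    List.drop_append_of_le_length hx
  rw [h] at hb
  simp at hb
  exact ⟨_, hb.symm⟩

theorem suffix_eq_of_length_eq {s g q : List A} (hs : s <:+ q) (hg : g <:+ q)
    (hl : s.length = g.length) : s = g := by
  obtain ⟨t1, ht1⟩ := hs; obtain ⟨t2, ht2⟩ := hg
  have h := ht1.trans ht2.symm
  have hlen : t1.length = t2.length := by
    have h' := congrArg List.length h; simp at h'; omega
  exact (List.append_inj h hlen).2

theorem conj_rec : ∀ (n : ℕ) (z x y : List A), z.length ≤ n → x ≠ [] →
    x ++ z = z ++ y →
    ∃ a b k, x = a ++ b ∧ y = b ++ a ∧ z = wpow (a ++ b) k ++ a := by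
  intro n
  induction n with
  | zero =>
    intro z x y hz hx h
    have hz0 : z = [] := List.length_eq_zero_iff.mp (Nat.le_zero.mp hz)
    subst hz0
    simp at h
    exact ⟨[], x, 0, by simp, by simp [h], by simp [wpow_zero]⟩
  | succ n ih =>
    intro z x y hz hx h
    by_cases hle : x.length ≤ z.length
    · have hpre : x <+: z := prefix_of_eq_append h hle
      obtain ⟨z', hz'⟩ := hpre
      subst hz'
      have h' : x ++ z' = z' ++ y := by
        have h2 : x ++ (x ++ z') = x ++ (z' ++ y) := by
          simpa [List.append_assoc] using h
        exact List.append_cancel_left h2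
      have hxlen : 0 < x.length := List.length_pos_iff.mpr hx
      have hzn : z'.length ≤ n := by
        have h3 := hz; simp at h3; omega
      obtain ⟨a, b, k, h1, h2, h3⟩ := ih z' x y hzn hx h'
      refine ⟨a, b, k+1, h1, h2, ?_⟩
      rw [h3, wpow_succ, ← h1]
      simp [List.append_assoc]
    · have hpre : z <+: x := prefix_of_eq_append h.symm (by omega)
      obtain ⟨t, ht⟩ := hpre
      refine ⟨z, t, 0, ht.symm, ?_, by simp [wpow_zero]⟩
      have h2 : z ++ (t ++ z) = z ++ y := by
        rw [← ht] at h
        simpa [List.append_assoc] using h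
      exact (List.append_cancel_left h2).symm

theorem comm_eq_pow : ∀ (n : ℕ) (x y : List A), x.length + y.length ≤ n →
    x ++ y = y ++ x → ∃ c m k, x = wpow c m ∧ y = wpow c k := by
  intro n
  induction n with
  | zero =>
    intro x y hl _
    have hx : x = [] := by apply List.length_eq_zero_iff.mp; omega
    have hy : y = [] := by apply List.length_eq_zero_iff.mp; omega
    exact ⟨[], 0, 0, by simp [hx, wpow_zero], by simp [hy, wpow_zero]⟩
  | succ n ih =>
    intro x y hl h
    by_cases hx : x = []
    · exact ⟨y, 0, 1, by simp [hx, wpow_zero], (wpow_one y).symm⟩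
    by_cases hy : y = []
    · exact ⟨x, 1, 0, (wpow_one x).symm, by simp [hy, wpow_zero]⟩
    have hxl : 0 < x.length := List.length_pos_iff.mpr hx
    have hyl : 0 < y.length := List.length_pos_iff.mpr hy
    rcases le_total x.length y.length with hle | hle
    · have hpre : x <+: y := prefix_of_eq_append h hle
      obtain ⟨y', hy'⟩ := hpre
      subst hy'
      have h' : x ++ y' = y' ++ x := by
        have h2 : x ++ (x ++ y') = x ++ (y' ++ x) := by
          simpa [List.append_assoc] using h
        exact List.append_cancel_left h2
      have hb : x.length + y'.length ≤ n := by simp at hl; omega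
      obtain ⟨c, m, k, h1, h2⟩ := ih x y' hb h'
      exact ⟨c, m, m + k, h1, by rw [wpow_add, ← h1, ← h2]⟩
    · have hpre : y <+: x := prefix_of_eq_append h.symm hle
      obtain ⟨x', hx'⟩ := hpre
      subst hx'
      have h' : y ++ x' = x' ++ y := by
        have h2 : y ++ (y ++ x') = y ++ (x' ++ y) := by
          simpa [List.append_assoc] using h.symm
        exact List.append_cancel_left h2
      have hb : y.length + x'.length ≤ n := by simp at hl; omega
      obtain ⟨c, m, k, h1, h2⟩ := ih y x' hb h'
      exact ⟨c, m + k, m, by rw [wpow_add, ← h1, ← h2], h1⟩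

theorem prim_no_internal (q u v : List A) (hprim : Primitive q)
    (h : u ++ q ++ v = q ++ q) (hu : u ≠ []) (hv : v ≠ []) : False := by
  have hul : 0 < u.length := List.length_pos_iff.mpr hu
  have hvl : 0 < v.length := List.length_pos_iff.mpr hv
  have hlen : u.length + v.length = q.length := by
    have h' := congrArg List.length h; simp at h'; omega
  have hupre : u <+: q := by
    apply prefix_of_eq_append (r := q ++ v) (r' := q)
    · simpa [List.append_assoc] using h
    · omega
  obtain ⟨w, hw⟩ := hupre
  have hwl : w.length = v.length := by
    have := congrArg List.length hw; simp at this; omega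
  have hwne : w ≠ [] := by
    intro h0; rw [h0] at hwl; simp at hwl; omega
  have hkey : w ++ q = q ++ v := by
    have h2 : u ++ (w ++ q) = u ++ (q ++ v) := by
      calc u ++ (w ++ q) = (u ++ w) ++ q := by simp [List.append_assoc]
        _ = q ++ q := by rw [hw]
        _ = u ++ (q ++ v) := by rw [← h]; simp [List.append_assoc]
    exact List.append_cancel_left h2
  obtain ⟨a, b, k, ha, hb, hq'⟩ := conj_rec q.length q w v le_rfl hwne hkey
  have hal : a.length ≤ w.length := by
    have := congrArg List.length ha; simp at this; omega
  have hk1 : 1 ≤ k := by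
    by_contra hk0
    have hk : k = 0 := by omega
    rw [hk, wpow_zero] at hq'
    have := congrArg List.length hq'
    simp at this
    omega
  obtain ⟨k', rfl⟩ : ∃ k', k = k' + 1 := ⟨k-1, by omega⟩
  have hq2 : q = (wpow w k' ++ a) ++ (b ++ a) := by
    rw [hq', ← ha, wpow_add, wpow_one]
    nth_rewrite 2 [ha]
    simp [List.append_assoc]
  have hsplit : u ++ w = (wpow w k' ++ a) ++ (b ++ a) := by rw [hw, hq2]
  have hlens : w.length = (b ++ a).length := by
    have := congrArg List.length ha; simp at this ⊢; omega
  have hwba : w = b ++ a := (List.append_inj' hsplit hlens).2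
  have hcomm : a ++ b = b ++ a := by rw [← ha, ← hwba]
  obtain ⟨c, m, mb, hac, hbc⟩ := comm_eq_pow (a.length + b.length) a b le_rfl hcomm
  have hwc : w = wpow c (m + mb) := by rw [ha, hac, hbc, wpow_add]
  have hqc : q = wpow c ((k'+1) * (m + mb) + m) := by
    rw [hq', hac, hbc, ← wpow_add, wpow_wpow, ← wpow_add]
  have hN := hprim.2 c _ hqc
  have hc1 : 0 < (m + mb) * c.length := by
    have := congrArg List.length hwc
    rw [wpow_length] at this
    omega
  have hmmb : 0 < m + mb := by
    rcases Nat.eq_zero_or_pos (m + mb) with h0 | h0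
    · rw [h0] at hc1; simp at hc1
    · exact h0
  have hprod : 0 < (k'+1) * (m + mb) := Nat.mul_pos (by omega) hmmb
  have hm0 : m = 0 ∧ (k'+1) * (m + mb) = 1 := by omega
  have hmb : m + mb = 1 := Nat.dvd_one.mp (Dvd.intro_left _ hm0.2)
  have hwq : w.length = q.length := by
    have h1 := congrArg List.length hwc
    have h2 := congrArg List.length hqc
    rw [wpow_length] at h1 h2
    rw [hmb] at h1
    rw [hN] at h2
    omega
  omega

theorem prim_sync (q u v : List A) (n : ℕ) (hprim : Primitive q)
    (h : u ++ (q ++ v) = wpow q n) : q.length ∣ u.length := by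
  have hqne : q ≠ [] := hprim.1
  have hL : 0 < q.length := List.length_pos_iff.mpr hqne
  by_contra hndvd
  obtain ⟨a, b, hab, hbL, hb1⟩ :
      ∃ a b, u.length = a * q.length + b ∧ b < q.length ∧ 1 ≤ b := by
    refine ⟨u.length / q.length, u.length % q.length, ?_, Nat.mod_lt _ hL, ?_⟩
    · rw [Nat.mul_comm]; exact (Nat.div_add_mod _ _).symm
    · rcases Nat.eq_zero_or_pos (u.length % q.length) with h0 | h0
      · exact absurd (Nat.dvd_of_mod_eq_zero h0) hndvd
      · exact h0
  have htot : u.length + q.length + v.length = n * q.length := by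
    have h' := congrArg List.length h
    simp [wpow_length] at h'
    omega
  have han : a + 2 ≤ n := by
    have h1 : (a + 1) * q.length < n * q.length := by
      have e : (a + 1) * q.length = a * q.length + q.length := by ring
      omega
    have h2 : a + 1 < n := lt_of_mul_lt_mul_right h1 (Nat.zero_le _)
    omega
  have hual : a * q.length ≤ u.length := by omega
  have hu1 : u.take (a * q.length) = wpow q a := by
    have e1 : (u ++ (q ++ v)).take (a * q.length) = u.take (a * q.length) :=
      List.take_append_of_le_length hual
    have e2 : wpow q n = wpow q a ++ wpow q (n - a) := by
      rw [← wpow_add]; congr 1; omega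
    have e3 : (wpow q a ++ wpow q (n - a)).take (a * q.length) = wpow q a := by
      have e4 : (wpow q a).length = a * q.length := by rw [wpow_length]
      rw [← e4, List.take_left]
    rw [h, e2, e3] at e1
    exact e1.symm
  have hu'l : (u.drop (a * q.length)).length = b := by simp; omega
  have husplit : u = wpow q a ++ u.drop (a * q.length) := by
    rw [← hu1, List.take_append_drop]
  set u' := u.drop (a * q.length) with hu'def
  have hn : n = a + (1 + (1 + (n - a - 2))) := by omega
  have e2 : wpow q n = wpow q a ++ (q ++ (q ++ wpow q (n - a - 2))) := by
    conv_lhs => rw [hn]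
    rw [wpow_add, wpow_add, wpow_add, wpow_one]
  have h2 : u' ++ (q ++ v) = q ++ (q ++ wpow q (n - a - 2)) := by
    rw [husplit, e2] at h
    have h' : wpow q a ++ (u' ++ (q ++ v))
        = wpow q a ++ (q ++ (q ++ wpow q (n - a - 2))) := by
      simpa [List.append_assoc] using h
    exact List.append_cancel_left h'
  have hvlen : q.length - b ≤ v.length := by
    have h' := congrArg List.length h2
    rw [List.length_append, List.length_append, List.length_append,
      List.length_append, wpow_length, hu'l] at h'
    omega
  have hvsplit : v = v.take (q.length - b) ++ v.drop (q.length - b) :=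
    (List.take_append_drop _ _).symm
  have h3 : (u' ++ q ++ v.take (q.length - b)) ++ v.drop (q.length - b)
      = (q ++ q) ++ wpow q (n - a - 2) := by
    rw [hvsplit] at h2
    simpa [List.append_assoc] using h2
  have hlens : (u' ++ q ++ v.take (q.length - b)).length = (q ++ q).length := by
    rw [List.length_append, List.length_append, List.length_append,
      List.length_take, hu'l, Nat.min_eq_left hvlen]
    omega
  have h4 : u' ++ q ++ v.take (q.length - b) = q ++ q := (List.append_inj h3 hlens).1
  have hu'ne : u' ≠ [] := by
    intro h0; rw [h0] at hu'l; simp at hu'l; omega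
  have hv1l : (v.take (q.length - b)).length = q.length - b := by
    rw [List.length_take, Nat.min_eq_left hvlen]
  have hv1ne : v.take (q.length - b) ≠ [] := by
    intro h0
    rw [h0] at hv1l
    simp at hv1l
    omega
  exact prim_no_internal q u' (v.take (q.length - b)) hprim h4 hu'ne hv1ne

theorem suffix_wpow_decomp (q : List A) (hq : q ≠ []) :
    ∀ (i : ℕ) (y : List A), y <:+ wpow q i →
      ∃ s a, s <:+ q ∧ s.length < q.length ∧ y = s ++ wpow q a := by
  have hL : 0 < q.length := List.length_pos_iff.mpr hq
  intro i
  induction i with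
  | zero =>
    intro y hy
    have hy0 : y = [] := by simpa [wpow_zero] using hy
    exact ⟨[], 0, List.nil_suffix, by simpa using hL, by simp [hy0, wpow_zero]⟩
  | succ n ih =>
    intro y hy
    rw [wpow_succ] at hy
    obtain ⟨x, hx⟩ := hy
    by_cases hyl : y.length ≤ (wpow q n).length
    · exact ih y (suffix_of_eq_append hx hyl)
    · by_cases hxe : x = []
      · refine ⟨[], n+1, List.nil_suffix, hL, ?_⟩
        rw [hxe] at hx
        simpa [wpow_succ] using hx
      · have hxl : x.length ≤ q.length := by
          have h' := congrArg List.length hx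
          simp at h'
          omega
        have hxpre : x <+: q := prefix_of_eq_append hx hxl
        obtain ⟨s, hs⟩ := hxpre
        refine ⟨s, n, ⟨x, hs⟩, ?_, ?_⟩
        · have h' := congrArg List.length hs
          have hx0 : 0 < x.length := List.length_pos_iff.mpr hxe
          simp at h'
          omega
        · have h5 : x ++ y = x ++ (s ++ wpow q n) := by
            rw [hx, ← hs]
            simp [List.append_assoc]
          exact List.append_cancel_left h5

end Stmt3Aux

open Stmt3Aux

theorem stmt3 (A : Type) (g h : List A) (hh : h ≠ [])
    (hp : Primitive (g ++ h)) (hq : Primitive (h ++ g))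
    (y : List A) (i j : ℕ) (hi : 1 ≤ i) (hj : 1 ≤ j)
    (hsuf : y <:+ wpow (h ++ g) i) (hpre : y <+: wpow (g ++ h) j)
    (hlen : (h ++ g).length ≤ y.length) :
    y = g ++ wpow (h ++ g) (y.length / (h ++ g).length) ∧
    y = wpow (g ++ h) (y.length / (h ++ g).length) ++ g := by
  set q : List A := h ++ g with hqdef
  set p : List A := g ++ h with hpdef
  have hqne : q ≠ [] := hq.1
  have hL : 0 < q.length := List.length_pos_iff.mpr hqne
  obtain ⟨s, a, hsq, hsl, hys⟩ := suffix_wpow_decomp q hqne i y hsuf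
  -- a ≥ 1
  have hyl : y.length = s.length + a * q.length := by
    rw [hys]; simp [wpow_length]
  have ha1 : 1 ≤ a := by
    rcases Nat.eq_zero_or_pos a with h0 | h0
    · rw [h0] at hyl; simp at hyl; omega
    · exact h0
  obtain ⟨a', rfl⟩ : ∃ a', a = a' + 1 := ⟨a - 1, by omega⟩
  -- s ++ q is a prefix of y
  have hysq : y = (s ++ q) ++ wpow q a' := by
    rw [hys, wpow_succ]
    simp [List.append_assoc]
  -- y is a prefix of g ++ wpow q j (via conjugation)
  obtain ⟨r, hr⟩ := hpre
  have hconj : wpow p j ++ g = g ++ wpow q j := (wpow_conj g h j).symm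
  have hkey : (h ++ s) ++ (q ++ (wpow q a' ++ r ++ g)) = wpow q (j + 1) := by
    have e1 : y ++ (r ++ g) = g ++ wpow q j := by
      rw [← List.append_assoc, hr, hconj]
    have e2 : h ++ (y ++ (r ++ g)) = h ++ (g ++ wpow q j) := by rw [e1]
    calc (h ++ s) ++ (q ++ (wpow q a' ++ r ++ g))
        = h ++ (y ++ (r ++ g)) := by rw [hysq]; simp [List.append_assoc]
      _ = h ++ (g ++ wpow q j) := e2
      _ = q ++ wpow q j := by rw [hqdef]; simp [List.append_assoc]
      _ = wpow q (j + 1) := by rw [Nat.add_comm, wpow_add, wpow_one]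
  have hdvd : q.length ∣ (h ++ s).length :=
    prim_sync q (h ++ s) (wpow q a' ++ r ++ g) (j + 1) hq hkey
  -- (h ++ s).length = q.length, hence s.length = g.length
  have hhl : 0 < h.length := List.length_pos_iff.mpr hh
  have hhsl : (h ++ s).length = h.length + s.length := by simp
  have hqlen : q.length = h.length + g.length := by rw [hqdef]; simp
  have hsg : s.length = g.length := by
    obtain ⟨t, ht⟩ := hdvd
    have ht' : h.length + s.length = q.length * t := by
      rw [← hhsl]; exact ht
    have ht1 : 1 ≤ t := by
      rcases Nat.eq_zero_or_pos t with h0 | h0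
      · rw [h0, Nat.mul_zero] at ht'; omega
      · exact h0
    have ht2 : t < 2 := by
      by_contra hc
      have e1 : q.length * 2 ≤ q.length * t := Nat.mul_le_mul_left _ (by omega)
      have e2 : q.length * 2 = q.length + q.length := by ring
      omega
    have ht3 : t = 1 := by omega
    rw [ht3, Nat.mul_one] at ht'
    omega
  -- s = g
  have hgsuf : g <:+ q := ⟨h, rfl⟩
  have hseqg : s = g := suffix_eq_of_length_eq hsq hgsuf hsg
  -- compute the quotient
  have hk : y.length / q.length = a' + 1 := by
    rw [hyl, hsg]
    rw [Nat.add_mul_div_right _ _ hL, Nat.div_eq_of_lt (by omega)]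
    omega
  constructor
  · rw [hk, hys, hseqg]
  · rw [hk, hys, hseqg, wpow_conj]
end

section
/- Let (Γ, I) be an independence alphabet in which every vertex has degree at most 1 (i.e., I is a partial matching). Then the trace monoid M(Γ, I) embeds into a direct product of two free monoids, namely into ({cᵢ : i ∈ ℕ})* × ({dᵢ : i ∈ ℕ})*, via the homomorphism sending aᵢ ↦ (cᵢ, dᵢ) and bᵢ ↦ (cᵢ, dᵢdᵢ) for each independent pair (aᵢ, bᵢ). -/
/-- The congruence on the free monoid generated by `ab = ba` for independent `(a,b)`. -/
def traceCon {Γ : Type} (I : Γ → Γ → Prop) : Con (FreeMonoid Γ) :=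
  conGen fun u v => ∃ a b : Γ, I a b ∧
    u = FreeMonoid.of a * FreeMonoid.of b ∧ v = FreeMonoid.of b * FreeMonoid.of a

/-- The trace monoid of the independence alphabet `(Γ, I)`. -/
abbrev TraceMonoid {Γ : Type} (I : Γ → Γ → Prop) := (traceCon I).Quotient

/-!
Give each independent pair `{a, b}` a common index `i` (and every other letter an index of
its own) and send `a ↦ (cᵢ, dᵢ)`, `b ↦ (cᵢ, dᵢdᵢ)`. Two words with the same image have the
same sequence of indices, hence split alike into maximal blocks of letters of equal index.
A block contributes a nonempty power of `dᵢ` to the second component and neighbouring blocks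
have different indices, so the images of corresponding blocks agree. Within a block the
length and the exponent of `dᵢ` give the number of `a`s and of `b`s, and as `a` and `b`
commute this determines the block as a trace; the words are then equal block by block.
-/

open List

section General

variable {Γ : Type} {I : Γ → Γ → Prop}

theorem traceCon_le_ker_lift {M : Type*} [Monoid M] (f : Γ → M)
    (hf : ∀ a b, I a b → Commute (f a) (f b)) :
    traceCon I ≤ Con.ker (FreeMonoid.lift f) := by
  refine Con.conGen_le.mpr ?_
  rintro _ _ ⟨a, b, hab, rfl, rfl⟩
  simpa [Con.ker_rel] using (hf a b hab).eq

theorem traceCon_ofList_of_perm {r s : List Γ} (h : r ~ s)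
    (hr : ∀ x ∈ r, ∀ y ∈ r, x = y ∨ I x y) :
    traceCon I (FreeMonoid.ofList r) (FreeMonoid.ofList s) := by
  induction h with
  | nil => exact (traceCon I).refl _
  | cons x _ ih =>
    have hl := ih fun a ha b hb => hr a (mem_cons_of_mem _ ha) b (mem_cons_of_mem _ hb)
    simpa [FreeMonoid.ofList_cons] using (traceCon I).mul ((traceCon I).refl _) hl
  | swap x y l =>
    rcases hr y (by simp) x (by simp) with rfl | hyx
    · exact (traceCon I).refl _
    · have hgen : traceCon I (FreeMonoid.of y * FreeMonoid.of x)
          (FreeMonoid.of x * FreeMonoid.of y) := ConGen.Rel.of _ _ ⟨y, x, hyx, rfl, rfl⟩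
      simpa [FreeMonoid.ofList_cons, mul_assoc] using (traceCon I).mul hgen ((traceCon I).refl _)
  | trans h₁₂ _ ih₁ ih₂ =>
    refine (traceCon I).trans (ih₁ hr) (ih₂ fun x hx y hy => ?_)
    exact hr x (h₁₂.mem_iff.mpr hx) y (h₁₂.mem_iff.mpr hy)

end General

section RunDecomposition

variable {α β : Type*} {g : α → List β} {p : β → Bool} {q : α → Bool}

theorem List.takeWhile_flatMap (hg : ∀ a, g a ≠ [] ∧ ∀ b ∈ g a, p b = q a) (l : List α) :
    (l.flatMap g).takeWhile p = (l.takeWhile q).flatMap g := by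
  induction l with
  | nil => rfl
  | cons a l ih =>
    obtain ⟨hne, hp⟩ := hg a
    obtain ⟨b, t, hbt⟩ := exists_cons_of_ne_nil hne
    cases hqa : q a
    · have hpb : p b = false := (hp b (by simp [hbt])).trans hqa
      simp [hbt, hpb, hqa]
    · rw [flatMap_cons, takeWhile_append_of_pos fun b hb => (hp b hb).trans hqa, ih,
        takeWhile_cons_of_pos hqa, flatMap_cons]

theorem List.dropWhile_flatMap (hg : ∀ a, g a ≠ [] ∧ ∀ b ∈ g a, p b = q a) (l : List α) :
    (l.flatMap g).dropWhile p = (l.dropWhile q).flatMap g := by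
  induction l with
  | nil => rfl
  | cons a l ih =>
    obtain ⟨hne, hp⟩ := hg a
    obtain ⟨b, t, hbt⟩ := exists_cons_of_ne_nil hne
    cases hqa : q a
    · have hpb : p b = false := (hp b (by simp [hbt])).trans hqa
      simp [hbt, hpb, hqa]
    · rw [flatMap_cons, dropWhile_append_of_pos fun b hb => (hp b hb).trans hqa, ih,
        dropWhile_cons_of_pos hqa]

end RunDecomposition

/-- Letter `a` is to be sent to `(index a, index a)`, or to `(index a, index a * index a)`
when `doubled a`; the index classes are exactly the singletons and the independent pairs. -/
structure MatchingLabelling {Γ : Type} (I : Γ → Γ → Prop) (α : Type*) where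
  index : Γ → α
  doubled : Γ → Bool
  index_eq : ∀ {a b}, I a b → index a = index b
  doubled_ne : ∀ {a b}, I a b → doubled a ≠ doubled b
  eq_or_indep : ∀ {a b}, index a = index b → a = b ∨ I a b

namespace MatchingLabelling

variable {Γ : Type} {I : Γ → Γ → Prop} {α : Type*} (L : MatchingLabelling I α)

theorem eq_of_index_eq_of_doubled_eq {a b : Γ} (h : L.index a = L.index b)
    (h' : L.doubled a = L.doubled b) : a = b :=
  (L.eq_or_indep h).resolve_right fun hab => L.doubled_ne hab h'

def sndWord (a : Γ) : List α :=
  replicate (if L.doubled a then 2 else 1) (L.index a)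

theorem sndWord_ne_nil (a : Γ) : L.sndWord a ≠ [] := by
  cases h : L.doubled a <;> simp [sndWord, h]

theorem eq_index_of_mem_sndWord {a : Γ} {i : α} (h : i ∈ L.sndWord a) : i = L.index a :=
  eq_of_mem_replicate h

theorem length_flatMap_sndWord (l : List Γ) :
    (l.flatMap L.sndWord).length = l.length + l.countP L.doubled := by
  induction l with
  | nil => rfl
  | cons a l ih => cases h : L.doubled a <;> simp [sndWord, h, ih] <;> omega

theorem perm_of_forall_index_eq {r s : List Γ} {i : α} (hr : ∀ y ∈ r, L.index y = i)
    (hs : ∀ y ∈ s, L.index y = i) (hlen : r.length = s.length)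
    (hdbl : r.countP L.doubled = s.countP L.doubled) : r ~ s := by
  classical
  refine perm_iff_count.mpr fun x => ?_
  by_cases hx : L.index x = i
  · -- inside one index class a letter is determined by its `doubled` flag
    have hcount : ∀ l : List Γ, (∀ y ∈ l, L.index y = i) →
        l.count x = l.countP fun y => L.doubled y == L.doubled x := by
      refine fun l hl => count_eq_countP.trans (countP_congr fun y hy => ?_)
      simpa using ⟨fun h => h ▸ rfl,
        L.eq_of_index_eq_of_doubled_eq ((hl y hy).trans hx.symm)⟩
    rw [hcount r hr, hcount s hs]
    have hr' := length_eq_countP_add_countP L.doubled (l := r)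
    have hs' := length_eq_countP_add_countP L.doubled (l := s)
    cases L.doubled x <;> simp_all
  · rw [count_eq_zero_of_not_mem fun h => hx (hr x h),
      count_eq_zero_of_not_mem fun h => hx (hs x h)]

def toHom : FreeMonoid Γ →* FreeMonoid α × FreeMonoid α :=
  FreeMonoid.lift fun a => (FreeMonoid.of (L.index a), FreeMonoid.ofList (L.sndWord a))

theorem toHom_ofList (u : List Γ) :
    L.toHom (FreeMonoid.ofList u) =
      (FreeMonoid.ofList (u.map L.index), FreeMonoid.ofList (u.flatMap L.sndWord)) := by
  induction u with
  | nil => rfl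
  | cons a u ih =>
    rw [FreeMonoid.ofList_cons, map_mul, ih, toHom, FreeMonoid.lift_eval_of]
    simp [FreeMonoid.ofList_cons, FreeMonoid.ofList_append]

theorem traceCon_le_ker_toHom : traceCon I ≤ Con.ker L.toHom := by
  refine traceCon_le_ker_lift _ fun a b hab => Commute.prod ?_ ?_
  · simp [L.index_eq hab]
  · simp only [Commute, SemiconjBy, sndWord, ← FreeMonoid.ofList_append, L.index_eq hab,
      replicate_append_replicate, Nat.add_comm]

def traceHom : TraceMonoid I →* FreeMonoid α × FreeMonoid α :=
  (traceCon I).lift L.toHom L.traceCon_le_ker_toHom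

variable [DecidableEq α]

theorem traceCon_of_map_index_eq_of_flatMap_sndWord_eq :
    ∀ u v : List Γ, u.map L.index = v.map L.index →
      u.flatMap L.sndWord = v.flatMap L.sndWord →
      traceCon I (FreeMonoid.ofList u) (FreeMonoid.ofList v)
  | [], v, hmap, _ => by
    rw [eq_nil_of_map_eq_nil hmap.symm]
    exact (traceCon I).refl _
  | c :: u, v, hmap, hsnd => by
    have hsnd_p : ∀ a, L.sndWord a ≠ [] ∧
        ∀ b ∈ L.sndWord a, decide (b = L.index c) = decide (L.index a = L.index c) :=
      fun a => ⟨L.sndWord_ne_nil a, fun b hb => by rw [L.eq_index_of_mem_sndWord hb]⟩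
    have hmap_take := congrArg (takeWhile (· = L.index c)) hmap
    have hmap_drop := congrArg (dropWhile (· = L.index c)) hmap
    have hsnd_take := congrArg (takeWhile (· = L.index c)) hsnd
    have hsnd_drop := congrArg (dropWhile (· = L.index c)) hsnd
    rw [takeWhile_map, takeWhile_map] at hmap_take
    rw [dropWhile_map, dropWhile_map] at hmap_drop
    rw [takeWhile_flatMap hsnd_p, takeWhile_flatMap hsnd_p] at hsnd_take
    rw [dropWhile_flatMap hsnd_p, dropWhile_flatMap hsnd_p] at hsnd_drop
    simp only [Function.comp_def] at hmap_take hmap_drop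
    set p : Γ → Bool := fun y => L.index y = L.index c with hp
    have hrun : ∀ l : List Γ, ∀ y ∈ l.takeWhile p, L.index y = L.index c :=
      fun l y hy => by simpa [hp] using mem_takeWhile_imp hy
    have hlen := congrArg length hmap_take
    have hlen_snd := congrArg length hsnd_take
    simp only [length_map, length_flatMap_sndWord] at hlen hlen_snd
    have hperm := L.perm_of_forall_index_eq (hrun _) (hrun v) hlen (by omega)
    have hhead := traceCon_ofList_of_perm hperm fun x hx y hy =>
      L.eq_or_indep ((hrun _ x hx).trans (hrun _ y hy).symm)
    have htail := traceCon_of_map_index_eq_of_flatMap_sndWord_eq _ _ hmap_drop hsnd_drop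
    rw [← takeWhile_append_dropWhile (p := p) (l := c :: u),
      ← takeWhile_append_dropWhile (p := p) (l := v), FreeMonoid.ofList_append,
      FreeMonoid.ofList_append]
    exact (traceCon I).mul hhead htail
termination_by u => u.length
decreasing_by
  rw [dropWhile_cons_of_pos (by simp)]
  exact Nat.lt_succ_of_le (dropWhile_sublist _).length_le

theorem traceHom_injective : Function.Injective L.traceHom := by
  intro x y
  refine Con.induction_on₂ x y fun u v h => (traceCon I).eq.mpr ?_
  rw [traceHom, Con.lift_coe, Con.lift_coe, ← FreeMonoid.ofList_toList u,
    ← FreeMonoid.ofList_toList v, toHom_ofList, toHom_ofList, Prod.mk.injEq] at h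
  simpa using L.traceCon_of_map_index_eq_of_flatMap_sndWord_eq _ _
    (FreeMonoid.ofList.injective h.1) (FreeMonoid.ofList.injective h.2)

end MatchingLabelling

section Partner

variable {Γ : Type} {I : Γ → Γ → Prop}

open Classical in
noncomputable def indepPartner (I : Γ → Γ → Prop) (a : Γ) : Γ :=
  if h : ∃ b, I a b then h.choose else a

theorem indepPartner_eq_or_indep (a : Γ) : indepPartner I a = a ∨ I a (indepPartner I a) := by
  unfold indepPartner
  split_ifs with h
  · exact Or.inr h.choose_spec
  · exact Or.inl rfl

theorem indepPartner_eq_of_indep (hdeg : ∀ a b c, I a b → I a c → b = c) {a b : Γ}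
    (hab : I a b) : indepPartner I a = b := by
  have h : ∃ b, I a b := ⟨b, hab⟩
  rw [indepPartner, dif_pos h]
  exact hdeg a _ b h.choose_spec hab

theorem indepPartner_indepPartner (hsym : ∀ a b, I a b → I b a)
    (hdeg : ∀ a b c, I a b → I a c → b = c) (a : Γ) :
    indepPartner I (indepPartner I a) = a := by
  rcases indepPartner_eq_or_indep (I := I) a with h | h
  · rw [h, h]
  · exact indepPartner_eq_of_indep hdeg (hsym _ _ h)

end Partner

/-- Number the letters injectively by `e`; a letter's index is the smaller number in its
independent pair, and `doubled` marks the letter carrying the larger one. -/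
theorem exists_matchingLabelling {Γ : Type} [Countable Γ] {I : Γ → Γ → Prop}
    (hirr : ∀ a, ¬ I a a) (hsym : ∀ a b, I a b → I b a)
    (hdeg : ∀ a b c, I a b → I a c → b = c) : Nonempty (MatchingLabelling I ℕ) := by
  obtain ⟨e, he⟩ := Countable.exists_injective_nat Γ
  have hPP := indepPartner_indepPartner hsym hdeg
  have hmin : ∀ x, ∃ z, (z = x ∨ z = indepPartner I x) ∧
      e z = min (e x) (e (indepPartner I x)) := fun x =>
    (min_choice (e x) (e (indepPartner I x))).elim (fun h => ⟨x, .inl rfl, h.symm⟩)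
      fun h => ⟨indepPartner I x, .inr rfl, h.symm⟩
  refine ⟨{ index := fun a => min (e a) (e (indepPartner I a))
            doubled := fun a => e (indepPartner I a) < e a
            index_eq := fun {a b} hab => ?_
            doubled_ne := fun {a b} hab => ?_
            eq_or_indep := fun {a b} h => ?_ }⟩
  · rw [indepPartner_eq_of_indep hdeg hab, indepPartner_eq_of_indep hdeg (hsym _ _ hab), min_comm]
  · have hne : e a ≠ e b := fun h => hirr a (he h ▸ hab)
    simp only [indepPartner_eq_of_indep hdeg hab, indepPartner_eq_of_indep hdeg (hsym _ _ hab),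
      ne_eq, decide_eq_decide]
    omega
  · obtain ⟨z, hza, hz⟩ := hmin a
    obtain ⟨z', hzb, hz'⟩ := hmin b
    obtain rfl : z = z' := he (hz.trans (h.trans hz'.symm))
    have hb : b = a ∨ b = indepPartner I a := by
      rcases hza with rfl | rfl <;> rcases hzb with hzb | hzb
      · exact .inl hzb.symm
      · exact .inr (by rw [hzb, hPP])
      · exact .inr hzb.symm
      · exact .inl (by rw [← hPP a, hzb, hPP])
    rcases hb with rfl | rfl
    · exact .inl rfl
    · exact (indepPartner_eq_or_indep a).imp Eq.symm id

/-- If every vertex of the independence alphabet has degree at most 1 (a partial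
matching), then the trace monoid embeds into the direct product of two free monoids
over countably infinite alphabets `{cᵢ}` and `{dᵢ}`, via a homomorphism mapping each
letter to `(cᵢ, dᵢ)` or `(cᵢ, dᵢdᵢ)`, with independent letters sharing the index `i`. -/
theorem stmt6 (Γ : Type) [Countable Γ] (I : Γ → Γ → Prop)
    (hirr : ∀ a, ¬ I a a) (hsym : ∀ a b, I a b → I b a)
    (hdeg : ∀ a b c, I a b → I a c → b = c) :
    ∃ f : TraceMonoid I →* FreeMonoid ℕ × FreeMonoid ℕ, Function.Injective f ∧
      ∃ idx : Γ → ℕ,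
        (∀ a : Γ,
          f ((traceCon I).mk' (FreeMonoid.of a)) =
            (FreeMonoid.of (idx a), FreeMonoid.of (idx a)) ∨
          f ((traceCon I).mk' (FreeMonoid.of a)) =
            (FreeMonoid.of (idx a), FreeMonoid.of (idx a) * FreeMonoid.of (idx a))) ∧
        ∀ a b : Γ, I a b → idx a = idx b := by
  obtain ⟨L⟩ := exists_matchingLabelling hirr hsym hdeg
  refine ⟨L.traceHom, L.traceHom_injective, L.index, fun a => ?_, fun a b => L.index_eq⟩
  rw [MatchingLabelling.traceHom, Con.lift_mk', MatchingLabelling.toHom, FreeMonoid.lift_eval_of]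
  cases h : L.doubled a <;> simp [MatchingLabelling.sndWord, h, FreeMonoid.ofList_cons]
end

section
/- The specific map η from the trace monoid over Σ = {aᵢ, bᵢ : i ∈ ℕ} with independence relation I = {(aᵢ,bᵢ), (bᵢ,aᵢ) : i ∈ ℕ}, defined on generators by η(aᵢ) = (cᵢ, dᵢ) and η(bᵢ) = (cᵢ, dᵢdᵢ), is a well-defined injective monoid homomorphism into {cᵢ : i ∈ ℕ}* × {dᵢ : i ∈ ℕ}*. -/
/-- The alphabet `Σ = {aᵢ, bᵢ : i ∈ ℕ}`: the letter `aᵢ` is `(i, false)` and `bᵢ` is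
`(i, true)`. The independence relation relates exactly `aᵢ` and `bᵢ` (both ways). -/
def pairI : ℕ × Bool → ℕ × Bool → Prop := fun x y => x.1 = y.1 ∧ x.2 ≠ y.2

/-!
`η` respects `aᵢbᵢ = bᵢaᵢ` because each component of `η aᵢ` and `η bᵢ` is a power of the single
letter `cᵢ`, resp. `dᵢ`. For injectivity, suppose `η u = η v` and argue by induction on `u`. The
first letters of `u` and `v` have the same index `i`; if they agree, cancel them. Otherwise
`u = x u'` and `v = y v'` with `{x, y} = {aᵢ, bᵢ}`. Comparing the lengths of the leading runs of
`cᵢ` and of `dᵢ` in the two components of `η u = η v` shows that the leading block of index-`i`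
letters of `v'` contains an `x`. That `x` commutes with the letters in front of it, so `v' ~ x w`;
then `u' ~ y w` by the induction hypothesis, and `x u' ~ x y w ~ y x w ~ y v'`.
-/

open FreeMonoid

theorem FreeMonoid.of_mul_eq_of_mul_iff {α : Type*} {x y : α} {u v : FreeMonoid α} :
    of x * u = of y * v ↔ x = y ∧ u = v :=
  List.cons_eq_cons

theorem FreeMonoid.of_mul_ne_one {α : Type*} (x : α) (u : FreeMonoid α) : of x * u ≠ 1 :=
  List.cons_ne_nil x u

section Trace

variable {Γ : Type} {I : Γ → Γ → Prop}

theorem traceCon_mk'_commute {a b : Γ} (h : I a b) :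
    Commute ((traceCon I).mk' (of a)) ((traceCon I).mk' (of b)) := by
  simp only [Commute, SemiconjBy, ← map_mul]
  exact (Con.eq _).mpr (ConGen.Rel.of _ _ ⟨a, b, h, rfl, rfl⟩)

theorem traceCon_le_ker {M : Type*} [Monoid M] {φ : FreeMonoid Γ →* M}
    (h : ∀ a b, I a b → Commute (φ (of a)) (φ (of b))) : traceCon I ≤ Con.ker φ :=
  Con.conGen_le.mpr fun _ _ ⟨a, b, hab, hu, hv⟩ => by
    rw [Con.ker_rel, hu, hv, map_mul, map_mul]
    exact h a b hab

end Trace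

namespace PairTrace

def expand : FreeMonoid (ℕ × Bool) →* FreeMonoid ℕ :=
  FreeMonoid.lift fun x => cond x.2 (of x.1 * of x.1) (of x.1)

def eta : FreeMonoid (ℕ × Bool) →* FreeMonoid ℕ × FreeMonoid ℕ :=
  (map Prod.fst).prod expand

theorem eta_of_commute (i : ℕ) (c d : Bool) :
    Commute (eta (of (i, c))) (eta (of (i, d))) := by
  cases c <;> cases d <;> simp [Commute, SemiconjBy, eta, expand, mul_assoc]

theorem traceCon_le_ker_eta : traceCon pairI ≤ Con.ker eta :=
  traceCon_le_ker fun ⟨i, c⟩ ⟨_, d⟩ ⟨h, _⟩ => by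
    obtain rfl : i = _ := h
    exact eta_of_commute i c d

def leadRun (i : ℕ) (w : FreeMonoid ℕ) : ℕ :=
  (w.toList.takeWhile (· = i)).length

def blockCount (i : ℕ) (c : Bool) (w : FreeMonoid (ℕ × Bool)) : ℕ :=
  (w.toList.takeWhile (·.1 = i)).count (i, c)

variable {i : ℕ}

@[simp] theorem leadRun_of_mul (j : ℕ) (w : FreeMonoid ℕ) :
    leadRun i (of j * w) = if j = i then leadRun i w + 1 else 0 := by
  by_cases h : j = i <;> simp [leadRun, h]

@[simp] theorem blockCount_of_mul (c : Bool) (x : ℕ × Bool) (w : FreeMonoid (ℕ × Bool)) :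
    blockCount i c (of x * w) =
      if x.1 = i then blockCount i c w + (if x.2 = c then 1 else 0) else 0 := by
  obtain ⟨j, d⟩ := x
  by_cases h : j = i <;> by_cases h' : d = c <;> simp [blockCount, h, h']

theorem leadRun_map_fst (w : FreeMonoid (ℕ × Bool)) :
    leadRun i (map Prod.fst w) = blockCount i false w + blockCount i true w := by
  induction w using FreeMonoid.inductionOn' with
  | one => rfl
  | of_mul x w ih =>
    obtain ⟨j, d⟩ := x
    by_cases h : j = i <;> cases d <;> simp [h, ih] <;> omega

theorem leadRun_expand (w : FreeMonoid (ℕ × Bool)) :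
    leadRun i (expand w) = blockCount i false w + 2 * blockCount i true w := by
  induction w using FreeMonoid.inductionOn' with
  | one => rfl
  | of_mul x w ih =>
    obtain ⟨j, d⟩ := x
    by_cases h : j = i <;> cases d <;> simp [expand, mul_assoc, h] at ih ⊢ <;> omega

theorem exists_eq_pow_mul_of_blockCount_pos {c : Bool} {w : FreeMonoid (ℕ × Bool)}
    (h : 0 < blockCount i c w) : ∃ k r, w = of (i, !c) ^ k * of (i, c) * r := by
  induction w using FreeMonoid.inductionOn' with
  | one => exact absurd h (Nat.lt_irrefl 0)
  | of_mul x w ih =>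
    obtain ⟨j, d⟩ := x
    have hj : j = i := by by_contra hj; simp [hj] at h
    subst hj
    by_cases hd : d = c
    · exact ⟨0, w, by simp [hd]⟩
    · obtain rfl : d = !c := by cases c <;> cases d <;> simp_all
      obtain ⟨k, r, rfl⟩ := ih (by simpa using h)
      exact ⟨k + 1, r, by simp [pow_succ', mul_assoc]⟩

theorem blockCount_pos_of_eta_eq {c : Bool} {u v : FreeMonoid (ℕ × Bool)}
    (h : eta (of (i, c) * u) = eta (of (i, !c) * v)) : 0 < blockCount i c v := by
  have hfst := congrArg (leadRun i ∘ Prod.fst) h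
  have hsnd := congrArg (leadRun i ∘ Prod.snd) h
  simp only [Function.comp_apply, eta, MonoidHom.prod_apply, leadRun_map_fst, leadRun_expand,
    blockCount_of_mul] at hfst hsnd
  cases c <;> simp at hfst hsnd ⊢ <;> omega

abbrev toTrace : FreeMonoid (ℕ × Bool) →* TraceMonoid pairI := (traceCon pairI).mk'

theorem toTrace_commute (i : ℕ) (c : Bool) :
    Commute (toTrace (of (i, c))) (toTrace (of (i, !c))) :=
  traceCon_mk'_commute ⟨rfl, by simp⟩

theorem eta_eq_of_toTrace_eq {u v : FreeMonoid (ℕ × Bool)} (h : toTrace u = toTrace v) :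
    eta u = eta v :=
  traceCon_le_ker_eta ((Con.eq _).mp h)

theorem exists_toTrace_eq_of_mul {c : Bool} {v : FreeMonoid (ℕ × Bool)}
    (h : 0 < blockCount i c v) : ∃ w, toTrace v = toTrace (of (i, c) * w) := by
  obtain ⟨k, r, rfl⟩ := exists_eq_pow_mul_of_blockCount_pos h
  refine ⟨of (i, !c) ^ k * r, ?_⟩
  simp only [map_mul, map_pow]
  rw [((toTrace_commute i c).symm.pow_left k).eq, mul_assoc]

theorem toTrace_of_mul_eq_of_not_mul {c : Bool} {u v : FreeMonoid (ℕ × Bool)}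
    (ih : ∀ v, eta u = eta v → toTrace u = toTrace v)
    (h : eta (of (i, c) * u) = eta (of (i, !c) * v)) :
    toTrace (of (i, c) * u) = toTrace (of (i, !c) * v) := by
  obtain ⟨w, hv⟩ := exists_toTrace_eq_of_mul (blockCount_pos_of_eta_eq h)
  have hu : eta u = eta (of (i, !c) * w) := by
    refine mul_left_cancel (a := eta (of (i, c))) ?_
    calc eta (of (i, c)) * eta u = eta (of (i, !c)) * (eta (of (i, c)) * eta w) := by
          rw [← map_mul, h, map_mul, eta_eq_of_toTrace_eq hv, map_mul]
      _ = eta (of (i, c)) * eta (of (i, !c) * w) := by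
          rw [← mul_assoc, (eta_of_commute i (!c) c).eq, map_mul, mul_assoc]
  calc toTrace (of (i, c) * u) = toTrace (of (i, c)) * (toTrace (of (i, !c)) * toTrace w) := by
        rw [map_mul, ih _ hu, map_mul]
    _ = toTrace (of (i, !c) * v) := by
        rw [← mul_assoc, (toTrace_commute i c).eq, map_mul _ _ v, hv, map_mul, mul_assoc]

theorem toTrace_eq_of_eta_eq (u : FreeMonoid (ℕ × Bool)) :
    ∀ v, eta u = eta v → toTrace u = toTrace v := by
  induction u using FreeMonoid.inductionOn' with
  | one =>
    intro v h
    cases v using FreeMonoid.casesOn with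
    | one => rfl
    | of_mul y v => exact absurd (congrArg Prod.fst h).symm (of_mul_ne_one _ _)
  | of_mul x u ih =>
    intro v h
    cases v using FreeMonoid.casesOn with
    | one => exact absurd (congrArg Prod.fst h) (of_mul_ne_one _ _)
    | of_mul y v =>
    obtain ⟨i, c⟩ := x
    obtain ⟨j, d⟩ := y
    obtain ⟨rfl, -⟩ : i = j ∧ _ := of_mul_eq_of_mul_iff.mp (congrArg Prod.fst h)
    rcases Bool.eq_or_eq_not d c with rfl | rfl
    · rw [map_mul, map_mul, ih v (mul_left_cancel (by simpa only [map_mul] using h))]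
    · exact toTrace_of_mul_eq_of_not_mul ih h

end PairTrace

/-- The map `η` with `η(aᵢ) = (cᵢ, dᵢ)` and `η(bᵢ) = (cᵢ, dᵢdᵢ)` is a well-defined
injective monoid homomorphism from the trace monoid `M(Σ, I)` into the direct product
of two countably generated free monoids. -/
theorem stmt7 :
    ∃ η : TraceMonoid pairI →* FreeMonoid ℕ × FreeMonoid ℕ,
      Function.Injective η ∧
      ∀ i : ℕ,
        η ((traceCon pairI).mk' (FreeMonoid.of (i, false))) =
          (FreeMonoid.of i, FreeMonoid.of i) ∧
        η ((traceCon pairI).mk' (FreeMonoid.of (i, true))) =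
          (FreeMonoid.of i, FreeMonoid.of i * FreeMonoid.of i) := by
  refine ⟨(traceCon pairI).lift PairTrace.eta PairTrace.traceCon_le_ker_eta,
    fun x y hxy => ?_, fun i => ⟨rfl, rfl⟩⟩
  obtain ⟨u, rfl⟩ := (traceCon pairI).mk'_surjective x
  obtain ⟨v, rfl⟩ := (traceCon pairI).mk'_surjective y
  rw [Con.lift_mk', Con.lift_mk'] at hxy
  exact PairTrace.toTrace_eq_of_eta_eq u v hxy
end

section
/- Let a_u, a_v, a_w, b_u, b_v, b_w be natural numbers with a_v + b_v > 0 and a_w + b_w > 0. Then there exist natural numbers x_v, x_w, y_v, y_w, not all zero, satisfying: a_v x_v = a_w y_w, a_w x_w = a_v y_v, and b_v x_v + b_w x_w = b_w y_w + b_v y_v. -/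
/-- The key linear-algebraic lemma: the system `a_v x_v = a_w y_w`,
`a_w x_w = a_v y_v`, `b_v x_v + b_w x_w = b_w y_w + b_v y_v` has a nontrivial
solution in natural numbers. -/
theorem stmt9 (au av aw bu bv bw : ℕ) (hv : 0 < av + bv) (hw : 0 < aw + bw) :
    ∃ xv xw yv yw : ℕ, ¬(xv = 0 ∧ xw = 0 ∧ yv = 0 ∧ yw = 0) ∧
      av * xv = aw * yw ∧ aw * xw = av * yv ∧
      bv * xv + bw * xw = bw * yw + bv * yv := by
  by_cases h : av = 0 ∧ aw = 0
  · exact ⟨1, 0, 1, 0, by simp, by simp [h.1, h.2], by simp [h.1, h.2], by ring⟩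
  · exact ⟨aw, av, aw, av, by omega, by ring, by ring, by ring⟩
end

section
/- Let (Γ, I) be an independence alphabet and η : M(Γ, I) → Q an embedding into the queue monoid. Then the graph (Γ, I) contains no induced path P₄, i.e., there are no four distinct letters a, b, c, d with (a,b), (b,c), (c,d) ∈ I and (a,c), (b,d), (a,d) ∉ I. -/
/-- The congruence on the free monoid of queue actions identifying sequences with the
same effect on every queue state. -/
def queueCon (A : Type) [DecidableEq A] : Con (FreeMonoid (A ⊕ A)) where
  r u v := QEquiv A u.toList v.toList
  iseqv := ⟨fun _ _ => rfl, fun h q => (h q).symm, fun h1 h2 q => (h1 q).trans (h2 q)⟩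
  mul' := by
    intro u v u' v' hu hv q
    have h1 := hu q
    have h2 := hv (qact A q v.toList)
    show qact A q (u * u').toList = qact A q (v * v').toList
    rw [FreeMonoid.toList_mul, FreeMonoid.toList_mul]
    unfold qact at h1 h2 ⊢
    rw [List.foldl_append, List.foldl_append, h1, h2]

/-- The queue monoid over the alphabet `A`. -/
abbrev QueueMonoid (A : Type) [DecidableEq A] := (queueCon A).Quotient

/-- Positive projection: erase all read actions. -/
def ppr {A : Type} (u : List (A ⊕ A)) : List A :=
  u.filterMap (Sum.elim some fun _ => none)

/-- Negative projection: erase all write actions (mapping ā to a). -/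
def npr {A : Type} (u : List (A ⊕ A)) : List A :=
  u.filterMap (Sum.elim (fun _ => none) some)

/-- `a ∈ Γ₊`: some (equivalently, every) representative of `η(a)` has nonempty positive
projection and empty negative projection. -/
def GammaPlus {Γ A : Type} [DecidableEq A] (I : Γ → Γ → Prop)
    (η : TraceMonoid I →* QueueMonoid A) (a : Γ) : Prop :=
  ∃ w : List (A ⊕ A),
    (queueCon A).mk' (FreeMonoid.ofList w) = η ((traceCon I).mk' (FreeMonoid.of a)) ∧
    ppr w ≠ [] ∧ npr w = []

/-- `a ∈ Γ₋`: some representative of `η(a)` has empty positive projection and nonempty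
negative projection. -/
def GammaMinus {Γ A : Type} [DecidableEq A] (I : Γ → Γ → Prop)
    (η : TraceMonoid I →* QueueMonoid A) (a : Γ) : Prop :=
  ∃ w : List (A ⊕ A),
    (queueCon A).mk' (FreeMonoid.ofList w) = η ((traceCon I).mk' (FreeMonoid.of a)) ∧
    ppr w = [] ∧ npr w ≠ []

/-- `a ∈ Γ±`: some representative of `η(a)` has both projections nonempty. -/
def GammaPM {Γ A : Type} [DecidableEq A] (I : Γ → Γ → Prop)
    (η : TraceMonoid I →* QueueMonoid A) (a : Γ) : Prop :=
  ∃ w : List (A ⊕ A),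
    (queueCon A).mk' (FreeMonoid.ofList w) = η ((traceCon I).mk' (FreeMonoid.of a)) ∧
    ppr w ≠ [] ∧ npr w ≠ []

/-!
The action of a queue word `w` on a queue is determined by three data: the written word
`posProj w`, the read word `negProj w`, and the deficit of `w`. Hence
representatives of commuting elements `η x`, `η y` have commuting projections, whereas for
dependent letters `x ≠ y` the two projections cannot both commute: otherwise, after padding with
a power of an unbalanced generator, `η` would identify two traces that differ in their projection
to `{x, y}`. As commutation of words is transitive through any nonempty word, along the path
`a - b - c - d` this forces one of `b`, `c` to be a pure writer and the other a pure reader, and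
then suitable powers of `a, b, c, d` give two traces with equal data under `η` but different
projections to `{a, d}`.
-/

namespace FreeMonoid

variable {α : Type*}

@[simp] lemma length_pow (x : FreeMonoid α) (n : ℕ) : (x ^ n).length = n * x.length := by
  induction n with
  | zero => simp
  | succ n ih => rw [pow_succ, length_mul, ih, Nat.succ_mul]

lemma length_pos {x : FreeMonoid α} (hx : x ≠ 1) : 0 < x.length :=
  Nat.pos_of_ne_zero (length_eq_zero.not.mpr hx)

lemma toList_eq_take_of_commute {x z : FreeMonoid α} (h : Commute x z) (hz : z ≠ 1) :
    x.toList = (z ^ x.length).toList.take x.length := by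
  have hpow := congrArg (List.take x.length ∘ toList) (h.pow_right x.length).eq
  simp only [Function.comp_apply, toList_mul] at hpow
  rw [List.take_left' (i := x.length) rfl] at hpow
  rw [hpow, List.take_append_of_le_length]
  show x.length ≤ (z ^ x.length).length
  rw [length_pow]
  exact Nat.le_mul_of_pos_right _ (length_pos hz)

lemma eq_of_commute_of_length_eq {x y z : FreeMonoid α} (hx : Commute x z) (hy : Commute y z)
    (hz : z ≠ 1) (hlen : x.length = y.length) : x = y := by
  have ex := toList_eq_take_of_commute hx hz
  have ey := toList_eq_take_of_commute hy hz
  rw [hlen] at ex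
  exact toList.injective (ex.trans ey.symm)

lemma commute_trans {x y z : FreeMonoid α} (hxz : Commute x z) (hzy : Commute z y)
    (hz : z ≠ 1) : Commute x y :=
  eq_of_commute_of_length_eq (hxz.mul_left hzy.symm) (hzy.symm.mul_left hxz) hz
    (by rw [length_mul, length_mul, add_comm])

lemma eq_one_of_commute_of_not_commute {x y z : FreeMonoid α} (hxy : Commute x y)
    (hyz : Commute y z) (hxz : ¬ Commute x z) : y = 1 ∧ x ≠ 1 ∧ z ≠ 1 := by
  refine ⟨?_, ?_, ?_⟩
  · by_contra hy
    exact hxz (commute_trans hxy hyz hy)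
  · rintro rfl
    exact hxz (Commute.one_left z)
  · rintro rfl
    exact hxz (Commute.one_right x)

lemma pow_length_eq_of_commute {x y : FreeMonoid α} (h : Commute x y) :
    x ^ y.length = y ^ x.length := by
  rcases eq_or_ne y 1 with rfl | hy
  · simp
  · exact eq_of_commute_of_length_eq (h.pow_left _) ((Commute.refl y).pow_left _) hy
      (by rw [length_pow, length_pow, mul_comm])

lemma not_commute_of_pow_of_pow {a b : α} (hab : a ≠ b) {m n : ℕ} (hm : m ≠ 0)
    (hn : n ≠ 0) : ¬ Commute (of a ^ m) (of b ^ n) := by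
  obtain ⟨m, rfl⟩ := Nat.exists_eq_add_one_of_ne_zero hm
  obtain ⟨n, rfl⟩ := Nat.exists_eq_add_one_of_ne_zero hn
  intro h
  have := congrArg (List.head? ∘ toList) h.eq
  rw [pow_succ', pow_succ', mul_assoc, mul_assoc] at this
  simp [hab] at this

end FreeMonoid

namespace QueueMonoid

variable {A : Type}

open FreeMonoid (length_mul length_of length_pow)

def posProj : FreeMonoid (A ⊕ A) →* FreeMonoid A where
  toFun w := .ofList (ppr w.toList)
  map_one' := rfl
  map_mul' _ _ := List.filterMap_append ..

def negProj : FreeMonoid (A ⊕ A) →* FreeMonoid A where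
  toFun w := .ofList (npr w.toList)
  map_one' := rfl
  map_mul' _ _ := List.filterMap_append ..

@[simp] lemma posProj_of_inl (a : A) : posProj (.of (.inl a)) = .of a := rfl
@[simp] lemma posProj_of_inr (a : A) : posProj (.of (.inr a)) = 1 := rfl
@[simp] lemma negProj_of_inl (a : A) : negProj (.of (.inl a)) = 1 := rfl
@[simp] lemma negProj_of_inr (a : A) : negProj (.of (.inr a)) = .of a := rfl

/-- The largest excess of reads over writes in a prefix of `w`: the least length of a queue
on which `w` can be executed. -/
def deficit (w : FreeMonoid (A ⊕ A)) : ℕ :=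
  w.toList.foldr (Sum.elim (fun _ k => k - 1) (fun _ k => k + 1)) 0

@[simp] lemma deficit_one : deficit (1 : FreeMonoid (A ⊕ A)) = 0 := rfl
@[simp] lemma deficit_of_inl_mul (a : A) (w : FreeMonoid (A ⊕ A)) :
    deficit (.of (.inl a) * w) = deficit w - 1 := rfl
@[simp] lemma deficit_of_inr_mul (a : A) (w : FreeMonoid (A ⊕ A)) :
    deficit (.of (.inr a) * w) = deficit w + 1 := rfl

lemma deficit_le_length_negProj (w : FreeMonoid (A ⊕ A)) :
    deficit w ≤ (negProj w).length := by
  induction w using FreeMonoid.inductionOn' with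
  | one => simp
  | of_mul x w ih =>
    cases x <;> simp only [map_mul, negProj_of_inl, negProj_of_inr,
      deficit_of_inl_mul, deficit_of_inr_mul, one_mul, length_mul, length_of] <;> omega

lemma length_negProj_le (w : FreeMonoid (A ⊕ A)) :
    (negProj w).length ≤ deficit w + (posProj w).length := by
  induction w using FreeMonoid.inductionOn' with
  | one => simp
  | of_mul x w ih =>
    cases x <;> simp only [map_mul, posProj_of_inl, posProj_of_inr, negProj_of_inl, negProj_of_inr,
      deficit_of_inl_mul, deficit_of_inr_mul, one_mul, length_mul, length_of] <;> omega

lemma deficit_mul (u v : FreeMonoid (A ⊕ A)) :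
    deficit (u * v) = max (deficit u) (deficit v + (negProj u).length - (posProj u).length) := by
  induction u using FreeMonoid.inductionOn' with
  | one => simp
  | of_mul x u ih =>
    rw [mul_assoc]
    cases x <;> simp only [ih, map_mul, posProj_of_inl, posProj_of_inr, negProj_of_inl,
      negProj_of_inr, deficit_of_inl_mul, deficit_of_inr_mul, one_mul, length_mul, length_of] <;>
      omega

@[simp] lemma qact_none [DecidableEq A] (w : List (A ⊕ A)) : qact A none w = none := by
  induction w with
  | nil => rfl
  | cons x w ih => exact ih

theorem qact_some [DecidableEq A] (w : FreeMonoid (A ⊕ A)) (q : List A) :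
    qact A (some q) w.toList =
      if (negProj w).toList <+: q ++ (posProj w).toList ∧ deficit w ≤ q.length then
        some ((q ++ (posProj w).toList).drop (negProj w).length)
      else none := by
  induction w using FreeMonoid.inductionOn' generalizing q with
  | one => simp [qact]
  | of_mul x w ih =>
    rcases x with a | a
    · change qact A (some (q ++ [a])) w.toList = _
      rw [ih]
      simp only [map_mul, posProj_of_inl, negProj_of_inl, one_mul, deficit_of_inl_mul,
        FreeMonoid.toList_of_mul, List.append_assoc, List.singleton_append, List.length_append,
        List.length_singleton]
      congr 1
      exact propext (and_congr_right fun _ => by omega)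
    · rcases q with _ | ⟨b, q⟩
      · change qact A none w.toList = _
        simp
      · change qact A (if b = a then some q else none) w.toList = _
        by_cases hba : b = a
        · subst hba
          simp [ih, length_mul, length_of, add_comm 1]
        · simp [hba, Ne.symm hba]

lemma mk'_eq_iff [DecidableEq A] {u v : FreeMonoid (A ⊕ A)} :
    (queueCon A).mk' u = (queueCon A).mk' v ↔ ∀ q, qact A q u.toList = qact A q v.toList :=
  (queueCon A).eq

theorem mk'_eq_of_projections_deficit_eq [DecidableEq A] {u v : FreeMonoid (A ⊕ A)}
    (hpos : posProj u = posProj v) (hneg : negProj u = negProj v) (hdef : deficit u = deficit v) :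
    (queueCon A).mk' u = (queueCon A).mk' v := by
  refine mk'_eq_iff.mpr fun q => ?_
  rcases q with _ | q
  · simp
  · rw [qact_some, qact_some, hpos, hneg, hdef]

/-- Run both actions on the queue `negProj u`, on which `u` is defined. -/
theorem projections_eq_of_mk'_eq [DecidableEq A] {u v : FreeMonoid (A ⊕ A)}
    (h : (queueCon A).mk' u = (queueCon A).mk' v)
    (hlen : (negProj u).length = (negProj v).length) :
    posProj u = posProj v ∧ negProj u = negProj v := by
  have hrun := mk'_eq_iff.mp h (some (negProj u).toList)
  rw [qact_some, qact_some, if_pos ⟨List.prefix_append _ _, deficit_le_length_negProj u⟩,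
    List.drop_left' (i := (negProj u).length) rfl] at hrun
  split_ifs at hrun with hv
  have hneg : negProj v = negProj u := by
    have := List.prefix_iff_eq_take.mp hv.1
    rwa [List.take_left' (i := (negProj v).toList.length) hlen] at this
  refine ⟨?_, hneg.symm⟩
  rw [hneg] at hrun
  rwa [List.drop_left' (i := (negProj u).length) rfl, Option.some_inj] at hrun

theorem commute_projections_of_commute [DecidableEq A] {u v : FreeMonoid (A ⊕ A)}
    (h : Commute ((queueCon A).mk' u) ((queueCon A).mk' v)) :
    Commute (posProj u) (posProj v) ∧ Commute (negProj u) (negProj v) := by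
  obtain ⟨hpos, hneg⟩ := projections_eq_of_mk'_eq (u := u * v) (v := v * u)
    (by rw [map_mul, map_mul]; exact h.eq) (by simp [length_mul, add_comm])
  rw [map_mul, map_mul] at hpos hneg
  exact ⟨hpos, hneg⟩


lemma deficit_pow_succ_of_le {z : FreeMonoid (A ⊕ A)}
    (hz : (negProj z).length ≤ (posProj z).length) (n : ℕ) :
    deficit (z ^ (n + 1)) = deficit z := by
  induction n with
  | zero => simp
  | succ n ih =>
    rw [pow_succ, deficit_mul, ih, map_pow, map_pow, length_pow, length_pow]
    have := deficit_le_length_negProj z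
    have := Nat.mul_le_mul_left (n + 1) hz
    omega

lemma deficit_pow_mul_of_lt {z : FreeMonoid (A ⊕ A)}
    (hz : (negProj z).length < (posProj z).length) {n : ℕ} (hn : n ≠ 0)
    (w : FreeMonoid (A ⊕ A)) (hw : deficit w ≤ n) :
    deficit (z ^ n * w) = deficit z := by
  obtain ⟨n, rfl⟩ := Nat.exists_eq_add_one_of_ne_zero hn
  rw [deficit_mul, deficit_pow_succ_of_le hz.le, map_pow, map_pow, length_pow, length_pow]
  have := Nat.mul_le_mul_left (n + 1) (Nat.succ_le_of_lt hz)
  rw [Nat.mul_succ] at this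
  omega

lemma deficit_mul_pow_of_lt {z : FreeMonoid (A ⊕ A)}
    (hz : (posProj z).length < (negProj z).length) {n : ℕ} (w : FreeMonoid (A ⊕ A))
    (hw : deficit w + (posProj w).length ≤ n) :
    deficit (w * z ^ n) = deficit (z ^ n) + (negProj w).length - (posProj w).length := by
  have hgrowth := length_negProj_le (z ^ n)
  rw [map_pow, map_pow, length_pow, length_pow] at hgrowth
  have := Nat.mul_le_mul_left n (Nat.succ_le_of_lt hz)
  rw [Nat.mul_succ] at this
  rw [deficit_mul]
  omega

lemma deficit_mul_comm_of_length_eq {u v : FreeMonoid (A ⊕ A)}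
    (hu : (negProj u).length = (posProj u).length)
    (hv : (negProj v).length = (posProj v).length) :
    deficit (u * v) = deficit (v * u) := by
  rw [deficit_mul, deficit_mul]
  omega

/-- Left padding by a power of a `z` that writes more than it reads, or right padding by one that
reads more than it writes, makes the deficit depend on the projections alone. -/
theorem exists_deficit_pow_mul_mul_pow_eq {u v z : FreeMonoid (A ⊕ A)}
    (hpos : posProj u = posProj v) (hneg : negProj u = negProj v)
    (hz : (negProj z).length ≠ (posProj z).length) :
    ∃ m n, deficit (z ^ m * u * z ^ n) = deficit (z ^ m * v * z ^ n) := by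
  rcases Nat.lt_or_gt_of_ne hz with hz | hz
  · refine ⟨deficit u + deficit v + 1, 0, ?_⟩
    simp only [pow_zero, mul_one]
    rw [deficit_pow_mul_of_lt hz (by omega) u (by omega),
      deficit_pow_mul_of_lt hz (by omega) v (by omega)]
  · refine ⟨0, deficit u + deficit v + (posProj u).length + 1, ?_⟩
    simp only [pow_zero, one_mul]
    rw [deficit_mul_pow_of_lt hz u (by omega), deficit_mul_pow_of_lt hz v (by rw [← hpos]; omega),
      hpos, hneg]

end QueueMonoid

namespace TraceMonoid

variable {Γ : Type} {I : Γ → Γ → Prop}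

lemma commute_mk'_of (a b : Γ) (h : I a b) :
    Commute ((traceCon I).mk' (.of a)) ((traceCon I).mk' (.of b)) := by
  change (traceCon I).mk' _ * (traceCon I).mk' _ = (traceCon I).mk' _ * (traceCon I).mk' _
  rw [← map_mul, ← map_mul]
  exact (Con.eq _).mpr (ConGen.Rel.of _ _ ⟨a, b, h, rfl, rfl⟩)

lemma traceCon_le_ker {M : Type*} [Monoid M] (f : FreeMonoid Γ →* M)
    (hf : ∀ a b, I a b → Commute (f (.of a)) (f (.of b))) : traceCon I ≤ Con.ker f := by
  refine Con.conGen_le.mpr ?_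
  rintro _ _ ⟨a, b, h, rfl, rfl⟩
  rw [Con.ker_rel, map_mul, map_mul]
  exact hf a b h

open Classical in
noncomputable def projectTo (S : Set Γ) : FreeMonoid Γ →* FreeMonoid Γ :=
  FreeMonoid.lift fun g => if g ∈ S then .of g else 1

@[simp] lemma projectTo_of_of_mem {S : Set Γ} {g : Γ} (h : g ∈ S) :
    projectTo S (.of g) = .of g := by
  simp [projectTo, h]

@[simp] lemma projectTo_of_of_notMem {S : Set Γ} {g : Γ} (h : g ∉ S) :
    projectTo S (.of g) = 1 := by
  simp [projectTo, h]

lemma projectTo_eq_of_traceCon {S : Set Γ} (hS : ∀ a ∈ S, ∀ b ∈ S, I a b → a = b)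
    {t₁ t₂ : FreeMonoid Γ} (h : traceCon I t₁ t₂) :
    projectTo S t₁ = projectTo S t₂ := by
  refine (Con.ker_rel _).mp (traceCon_le_ker _ (fun a b hab => ?_) h)
  by_cases ha : a ∈ S
  · by_cases hb : b ∈ S
    · rw [hS a ha b hb hab]
    · simp [hb]
  · simp [ha]

lemma projectTo_pair_eq_of_traceCon {x y : Γ} (hxy : ¬ I x y) (hyx : ¬ I y x)
    {t₁ t₂ : FreeMonoid Γ} (h : traceCon I t₁ t₂) :
    projectTo {x, y} t₁ = projectTo {x, y} t₂ := by
  refine projectTo_eq_of_traceCon ?_ h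
  rintro a (rfl | rfl) b (rfl | rfl) hab <;> first | rfl | contradiction

end TraceMonoid

section Embedding

open QueueMonoid TraceMonoid

variable {Γ A : Type} [DecidableEq A] {I : Γ → Γ → Prop}
  {η : TraceMonoid I →* QueueMonoid A} {w : Γ → FreeMonoid (A ⊕ A)}

lemma mk'_lift_eq (hw : ∀ g, (queueCon A).mk' (w g) = η ((traceCon I).mk' (.of g)))
    (t : FreeMonoid Γ) : (queueCon A).mk' (FreeMonoid.lift w t) = η ((traceCon I).mk' t) :=
  DFunLike.congr_fun (FreeMonoid.hom_eq (f := (queueCon A).mk'.comp (FreeMonoid.lift w))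
    (g := η.comp (traceCon I).mk') hw) t

lemma commute_projections_of_indep
    (hw : ∀ g, (queueCon A).mk' (w g) = η ((traceCon I).mk' (.of g))) {a b : Γ} (h : I a b) :
    Commute (posProj (w a)) (posProj (w b)) ∧ Commute (negProj (w a)) (negProj (w b)) :=
  commute_projections_of_commute (by rw [hw, hw]; exact (commute_mk'_of a b h).map η)

lemma traceCon_of_projections_deficit_eq (hη : Function.Injective η)
    (hw : ∀ g, (queueCon A).mk' (w g) = η ((traceCon I).mk' (.of g))) {t₁ t₂ : FreeMonoid Γ}
    (hpos : posProj (FreeMonoid.lift w t₁) = posProj (FreeMonoid.lift w t₂))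
    (hneg : negProj (FreeMonoid.lift w t₁) = negProj (FreeMonoid.lift w t₂))
    (hdef : deficit (FreeMonoid.lift w t₁) = deficit (FreeMonoid.lift w t₂)) :
    traceCon I t₁ t₂ :=
  (Con.eq _).mp <| hη <|
    (mk'_lift_eq hw t₁).symm.trans <|
      (mk'_eq_of_projections_deficit_eq hpos hneg hdef).trans (mk'_lift_eq hw t₂)

theorem not_commute_projections_of_not_indep (hη : Function.Injective η)
    (hw : ∀ g, (queueCon A).mk' (w g) = η ((traceCon I).mk' (.of g))) {x y : Γ} (hxy : x ≠ y)
    (hIxy : ¬ I x y) (hIyx : ¬ I y x) :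
    ¬ (Commute (posProj (w x)) (posProj (w y)) ∧ Commute (negProj (w x)) (negProj (w y))) := by
  rintro ⟨hpos, hneg⟩
  have hpos' : posProj (w x * w y) = posProj (w y * w x) := by simpa using hpos.eq
  have hneg' : negProj (w x * w y) = negProj (w y * w x) := by simpa using hneg.eq
  have key : ∀ g m n, deficit (w g ^ m * (w x * w y) * w g ^ n) =
      deficit (w g ^ m * (w y * w x) * w g ^ n) → False := by
    intro g m n hdef
    have htr := traceCon_of_projections_deficit_eq hη hw
      (t₁ := .of g ^ m * (.of x * .of y) * .of g ^ n)
      (t₂ := .of g ^ m * (.of y * .of x) * .of g ^ n)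
      (by simpa using hpos') (by simpa using hneg') (by simpa using hdef)
    have hproj := projectTo_pair_eq_of_traceCon hIxy hIyx htr
    simp only [map_mul] at hproj
    have := congrArg FreeMonoid.toList (mul_left_cancel (mul_right_cancel hproj))
    simp [hxy] at this
  rcases ne_or_eq (negProj (w x)).length (posProj (w x)).length with hx | hx
  · obtain ⟨m, n, h⟩ := exists_deficit_pow_mul_mul_pow_eq hpos' hneg' hx
    exact key x m n h
  rcases ne_or_eq (negProj (w y)).length (posProj (w y)).length with hy | hy
  · obtain ⟨m, n, h⟩ := exists_deficit_pow_mul_mul_pow_eq hpos' hneg' hy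
    exact key y m n h
  · exact key x 0 0 (by simpa using deficit_mul_comm_of_length_eq hx hy)

theorem false_of_pure_writer_of_pure_reader (hη : Function.Injective η)
    (hw : ∀ g, (queueCon A).mk' (w g) = η ((traceCon I).mk' (.of g))) {a b c d : Γ}
    (had : a ≠ d) (hIad : ¬ I a d) (hIda : ¬ I d a)
    (hba : b ≠ a) (hbd : b ≠ d) (hca : c ≠ a) (hcd : c ≠ d)
    (hab : Commute (posProj (w a)) (posProj (w b))) (hdc : Commute (negProj (w d)) (negProj (w c)))
    (hb : negProj (w b) = 1) (hb' : posProj (w b) ≠ 1)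
    (hc : posProj (w c) = 1) (hc' : negProj (w c) ≠ 1) : False := by
  set la := (posProj (w a)).length
  set lb := (posProj (w b)).length
  set ld := (negProj (w d)).length
  set lc := (negProj (w c)).length
  have hU : posProj (w a) ^ lb = posProj (w b) ^ la := FreeMonoid.pow_length_eq_of_commute hab
  have hV : negProj (w d) ^ lc = negProj (w c) ^ ld := FreeMonoid.pow_length_eq_of_commute hdc
  set r₁ : FreeMonoid Γ := .of d ^ lc * .of a ^ lb * .of c ^ ld
  set r₂ : FreeMonoid Γ := .of c ^ ld * .of a ^ lb * .of d ^ lc * .of b ^ la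
  -- The powers balance the writes of `a` against those of `b` and the reads of `d` against those
  -- of `c`; the long prefix of `b`s makes both deficits equal to that of `w b`.
  set X := deficit (FreeMonoid.lift w r₁) + deficit (FreeMonoid.lift w r₂) + 1
  have hwriter : (negProj (w b)).length < (posProj (w b)).length := by
    rw [hb]; exact FreeMonoid.length_pos hb'
  have htr := traceCon_of_projections_deficit_eq hη hw
    (t₁ := .of b ^ (X + la) * r₁) (t₂ := .of b ^ X * r₂)
    (by simp only [r₁, r₂, map_mul, map_pow, FreeMonoid.lift_eval_of, hc, one_pow, mul_one,
      one_mul, hU, pow_add, mul_assoc])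
    (by simp only [r₁, r₂, map_mul, map_pow, FreeMonoid.lift_eval_of, hb, one_pow, mul_one,
      one_mul, hV, mul_assoc])
    (by simp only [map_mul, map_pow, FreeMonoid.lift_eval_of]
        rw [deficit_pow_mul_of_lt hwriter (by omega) _ (by omega),
          deficit_pow_mul_of_lt hwriter (by omega) _ (by omega)])
  have hproj := projectTo_pair_eq_of_traceCon hIad hIda htr
  simp only [r₁, r₂, map_mul, map_pow, Set.mem_insert_iff, Set.mem_singleton_iff, hba, hbd, hca,
    hcd, or_self, not_false_eq_true, or_true, true_or, projectTo_of_of_notMem, projectTo_of_of_mem,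
    one_pow, mul_one, one_mul] at hproj
  exact FreeMonoid.not_commute_of_pow_of_pow had.symm (FreeMonoid.length_eq_zero.not.mpr hc')
    (FreeMonoid.length_eq_zero.not.mpr hb') hproj

end Embedding

open QueueMonoid FreeMonoid in
theorem stmt13_general (Γ A : Type) [DecidableEq A] (I : Γ → Γ → Prop)
    (hsym : ∀ a b, I a b → I b a)
    (η : TraceMonoid I →* QueueMonoid A) (hη : Function.Injective η) :
    ¬ ∃ a b c d : Γ, a ≠ b ∧ a ≠ c ∧ a ≠ d ∧ b ≠ c ∧ b ≠ d ∧ c ≠ d ∧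
      I a b ∧ I b c ∧ I c d ∧ ¬ I a c ∧ ¬ I b d ∧ ¬ I a d := by
  rintro ⟨a, b, c, d, hab, hac, had, -, hbd, hcd, Iab, Ibc, Icd, nIac, nIbd, nIad⟩
  choose w hw using fun g => (queueCon A).mk'_surjective (η ((traceCon I).mk' (.of g)))
  have nonedge {x y : Γ} (hxy : x ≠ y) (h : ¬ I x y) :=
    not_commute_projections_of_not_indep hη hw hxy h fun h' => h (hsym _ _ h')
  obtain ⟨pab, nab⟩ := commute_projections_of_indep hw Iab
  obtain ⟨pbc, nbc⟩ := commute_projections_of_indep hw Ibc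
  obtain ⟨pcd, ncd⟩ := commute_projections_of_indep hw Icd
  by_cases pbd : Commute (posProj (w b)) (posProj (w d))
  · obtain ⟨nc, nb, -⟩ := eq_one_of_commute_of_not_commute nbc ncd
      fun h => nonedge hbd nIbd ⟨pbd, h⟩
    obtain ⟨pb, -, pc⟩ := eq_one_of_commute_of_not_commute pab pbc
      fun h => nonedge hac nIac ⟨h, by rw [nc]; exact Commute.one_right _⟩
    exact false_of_pure_writer_of_pure_reader hη hw had.symm (fun h => nIad (hsym _ _ h)) nIad
      hcd hac.symm hbd hab.symm pcd.symm nab nc pc pb nb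
  · obtain ⟨pc, pb, -⟩ := eq_one_of_commute_of_not_commute pbc pcd pbd
    obtain ⟨nb, -, nc⟩ := eq_one_of_commute_of_not_commute nab nbc
      fun h => nonedge hac nIac ⟨by rw [pc]; exact Commute.one_right _, h⟩
    exact false_of_pure_writer_of_pure_reader hη hw had nIad (fun h => nIad (hsym _ _ h))
      hab.symm hbd hac.symm hcd pab ncd.symm nb pb pc nc

/-- If the trace monoid of `(Γ, I)` embeds into the queue monoid, then the graph
`(Γ, I)` contains no induced path `P₄`. -/
theorem stmt13 (Γ A : Type) [DecidableEq A] (I : Γ → Γ → Prop)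
    (hirr : ∀ a, ¬ I a a) (hsym : ∀ a b, I a b → I b a)
    (η : TraceMonoid I →* QueueMonoid A) (hη : Function.Injective η) :
    ¬ ∃ a b c d : Γ, a ≠ b ∧ a ≠ c ∧ a ≠ d ∧ b ≠ c ∧ b ≠ d ∧ c ≠ d ∧
      I a b ∧ I b c ∧ I c d ∧ ¬ I a c ∧ ¬ I b d ∧ ¬ I a d :=
  stmt13_general Γ A I hsym η hη
end

section
/- Let p and q be non-conjugate primitive words. If a word y is a factor of pᵐ and also a factor of qᵐ for some m, then |y| ≤ |p| + |q|. -/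
/-- Two words are conjugate if `p = gh` and `q = hg` for some `g` and nonempty `h`. -/
def Conjugate {A : Type} (p q : List A) : Prop :=
  ∃ g h : List A, h ≠ [] ∧ p = g ++ h ∧ q = h ++ g


theorem wpow_zero {A : Type} (p : List A) : wpow p 0 = [] := rfl
theorem wpow_succ {A : Type} (p : List A) (n : ℕ) : wpow p (n+1) = p ++ wpow p n := rfl

theorem wpow_length {A : Type} (p : List A) (n : ℕ) : (wpow p n).length = n * p.length := by
  induction n with
  | zero => simp [wpow_zero]
  | succ n ih => simp [wpow_succ, ih]; ring

theorem wpow_succ' {A : Type} (p : List A) (n : ℕ) : wpow p (n+1) = wpow p n ++ p := by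
  induction n with
  | zero => simp [wpow_succ, wpow_zero]
  | succ n ih =>
    calc wpow p (n+1+1) = p ++ wpow p (n+1) := rfl
      _ = p ++ (wpow p n ++ p) := by rw [ih]
      _ = (p ++ wpow p n) ++ p := by simp
      _ = wpow p (n+1) ++ p := rfl

theorem wpow_comm {A : Type} (a b : List A) (n : ℕ) :
    a ++ wpow (b ++ a) n = wpow (a ++ b) n ++ a := by
  induction n with
  | zero => simp [wpow_zero]
  | succ n ih =>
    rw [wpow_succ, wpow_succ,
      show a ++ ((b ++ a) ++ wpow (b ++ a) n) = (a ++ b) ++ (a ++ wpow (b ++ a) n) by simp, ih]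
    simp

theorem wpow_getElem? {A : Type} (p : List A) (m i : ℕ) (hi : i < m * p.length) :
    (wpow p m)[i]? = p[i % p.length]? := by
  induction m generalizing i with
  | zero => omega
  | succ m ih =>
    rw [wpow_succ]
    rcases lt_or_ge i p.length with h | h
    · rw [List.getElem?_append_left h, Nat.mod_eq_of_lt h]
    · have h2 : (m+1) * p.length = m * p.length + p.length := by ring
      rw [List.getElem?_append_right h, ih _ (by omega)]
      congr 1
      exact (Nat.mod_eq_sub_mod h).symm


theorem wpow_nil {A : Type} (n : ℕ) : wpow ([] : List A) n = [] := by
  apply List.eq_nil_of_length_eq_zero; simp [wpow_length]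

theorem rotate_mul_length {A : Type} (l : List A) (j : ℕ) : l.rotate (l.length * j) = l := by
  induction j with
  | zero => simp
  | succ j ih => rw [Nat.mul_succ, ← List.rotate_rotate, ih, List.rotate_length]

theorem wpow_rotate_le {A : Type} (w : List A) (n t : ℕ) (ht : t ≤ w.length) :
    (wpow w n).rotate t = wpow (w.rotate t) n := by
  cases n with
  | zero => simp [wpow_zero]
  | succ k =>
    have h1 : t ≤ (wpow w (k+1)).length := by
      rw [wpow_length]; exact le_trans ht (Nat.le_mul_of_pos_left _ k.succ_pos)
    calc (wpow w (k+1)).rotate t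
        = (w.drop t ++ wpow w k) ++ w.take t := by
          rw [List.rotate_eq_drop_append_take h1, wpow_succ,
            List.drop_append_of_le_length ht, List.take_append_of_le_length ht,
            List.append_assoc]
      _ = (w.drop t ++ wpow (w.take t ++ w.drop t) k) ++ w.take t := by
          rw [List.take_append_drop]
      _ = (wpow (w.drop t ++ w.take t) k ++ w.drop t) ++ w.take t := by
          rw [wpow_comm]
      _ = wpow (w.drop t ++ w.take t) (k+1) := by rw [wpow_succ']; simp
      _ = wpow (w.rotate t) (k+1) := by rw [List.rotate_eq_drop_append_take ht]

theorem wpow_rotate {A : Type} (w : List A) (n t : ℕ) :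
    (wpow w n).rotate t = wpow (w.rotate t) n := by
  rcases eq_or_ne w [] with hw | hw
  · subst hw; simp [wpow_nil]
  · have hlen : 0 < w.length := List.length_pos_iff.2 hw
    have fix : ∀ j, (wpow w n).rotate (w.length * j) = wpow w n := by
      intro j
      induction j with
      | zero => simp
      | succ j ih =>
        rw [Nat.mul_succ, ← List.rotate_rotate, ih, wpow_rotate_le w n w.length le_rfl,
          List.rotate_length]
    calc (wpow w n).rotate t
        = (wpow w n).rotate (w.length * (t / w.length) + t % w.length) := by
          rw [Nat.div_add_mod]
      _ = ((wpow w n).rotate (w.length * (t / w.length))).rotate (t % w.length) := by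
          rw [List.rotate_rotate]
      _ = (wpow w n).rotate (t % w.length) := by rw [fix]
      _ = wpow (w.rotate (t % w.length)) n := wpow_rotate_le w n _ (le_of_lt (Nat.mod_lt _ hlen))
      _ = wpow (w.rotate t) n := by rw [List.rotate_mod]

theorem Primitive.rotate {A : Type} {p : List A} (hp : Primitive p) (t : ℕ) :
    Primitive (p.rotate t) := by
  constructor
  · intro h
    apply hp.1
    have := congrArg List.length h
    simpa using List.eq_nil_of_length_eq_zero (by simpa using this)
  · intro r n heq
    have hlen : 0 < p.length := List.length_pos_iff.2 hp.1
    have hmul : t + (p.length - t % p.length) = p.length * (t / p.length + 1) := by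
      have h1 : p.length * (t / p.length) + t % p.length = t := Nat.div_add_mod t p.length
      have h2 : t % p.length < p.length := Nat.mod_lt _ hlen
      rw [Nat.mul_add, Nat.mul_one]; omega
    have h3 : p = (p.rotate t).rotate (p.length - t % p.length) := by
      rw [List.rotate_rotate, hmul, rotate_mul_length]
    rw [heq, wpow_rotate] at h3
    exact hp.2 _ n h3

def per {B : Type*} (f : ℕ → B) (n a : ℕ) : Prop := ∀ i, i + a < n → f i = f (i + a)

theorem per_sub {B : Type*} (f : ℕ → B) (n a b : ℕ) (ha : 0 < a) (hab : a < b)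
    (hn : a + b ≤ n) (pa : per f n a) (pb : per f n b) : per f n (b - a) := by
  intro i hi
  rcases lt_or_ge (i + b) n with h | h
  · have h1 := pa (i + (b - a)) (by omega)
    have h2 := pb i (by omega)
    rw [show i + (b - a) + a = i + b by omega] at h1
    rw [h2, ← h1]
  · have hai : a ≤ i := by omega
    have h1 := pa (i - a) (by omega)
    have h2 := pb (i - a) (by omega)
    rw [show i - a + a = i by omega] at h1
    rw [show i - a + b = i + (b - a) by omega] at h2
    rw [← h1, h2]

theorem fine_wilf_aux {B : Type*} (f : ℕ → B) (n : ℕ) :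
    ∀ k a b, a + b ≤ k → 0 < a → 0 < b → a + b ≤ n → per f n a → per f n b →
    per f n (Nat.gcd a b) := by
  intro k
  induction k with
  | zero => intro a b h ha hb _ _ _; omega
  | succ k ih =>
    intro a b hk ha hb hn pa pb
    rcases lt_trichotomy a b with h | h | h
    · have := ih a (b - a) (by omega) ha (by omega) (by omega) pa
        (per_sub f n a b ha h hn pa pb)
      rwa [Nat.gcd_sub_self_right (le_of_lt h)] at this
    · subst h; simpa [Nat.gcd_self] using pa
    · have := ih b (a - b) (by omega) hb (by omega) (by omega) pb
        (per_sub f n b a hb h (by omega) pb pa)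
      rw [Nat.gcd_sub_self_right (le_of_lt h)] at this
      rwa [Nat.gcd_comm] at this

theorem per_wpow {A : Type} (d : ℕ) (hd : 0 < d) : ∀ (k : ℕ) (w : List A),
    w.length = k * d → (∀ i, i + d < w.length → w[i]? = w[i + d]?) →
    w = wpow (w.take d) k := by
  intro k
  induction k with
  | zero =>
    intro w hw _
    have hw0 : w = [] := List.eq_nil_of_length_eq_zero (by simpa using hw)
    subst hw0; rfl
  | succ k ih =>
    intro w hw hper
    rcases Nat.eq_zero_or_pos k with hk | hk
    · subst hk
      have h1 : w.take d = w := List.take_of_length_le (by omega)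
      rw [h1]
      show w = wpow w 1
      simp [wpow]
    · have hlen : w.length = k * d + d := by rw [hw]; ring
      have hkd : d ≤ k * d := Nat.le_mul_of_pos_left d hk
      have hdrop : w.drop d = wpow ((w.drop d).take d) k := by
        apply ih
        · simp [hlen]
        · intro i hi
          have hi' : i + d < k * d := by simp only [List.length_drop, hlen] at hi; omega
          simp only [List.getElem?_drop]
          have := hper (d + i) (by omega)
          rw [show d + i + d = d + (i + d) by omega] at this
          exact this
      have htake : (w.drop d).take d = w.take d := by
        apply List.ext_getElem?
        intro i
        rcases lt_or_ge i d with h | h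
        · rw [List.getElem?_take_of_lt h, List.getElem?_take_of_lt h, List.getElem?_drop]
          have := hper i (by omega)
          rw [show d + i = i + d by omega]
          exact this.symm
        · rw [List.getElem?_eq_none (by simp; omega), List.getElem?_eq_none (by simp; omega)]
      conv_lhs => rw [← List.take_append_drop d w]
      rw [hdrop, htake, ← wpow_succ]

theorem infix_rep {A : Type} {y p : List A} {m : ℕ} (h : y <:+: wpow p m) :
    ∃ σ, (∀ i, i < y.length → y[i]? = p[(σ + i) % p.length]?) ∧
      σ + y.length ≤ m * p.length := by
  obtain ⟨s, t, hst⟩ := h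
  rw [List.append_assoc] at hst
  have hlen : s.length + (y.length + t.length) = m * p.length := by
    have := congrArg List.length hst
    simpa [wpow_length] using this
  refine ⟨s.length, fun i hi => ?_, by omega⟩
  have h1 : (wpow p m)[s.length + i]? = y[i]? := by
    rw [← hst, List.getElem?_append_right (by omega),
      show s.length + i - s.length = i by omega, List.getElem?_append_left hi]
  rw [← h1, wpow_getElem? _ _ _ (by omega)]

theorem take_eq_rotate {A : Type} {y p : List A} {σ : ℕ}
    (hp : p ≠ []) (hle : p.length ≤ y.length)
    (hσ : ∀ i, i < y.length → y[i]? = p[(σ + i) % p.length]?) :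
    y.take p.length = p.rotate (σ % p.length) := by
  have hlen : 0 < p.length := List.length_pos_iff.2 hp
  apply List.ext_getElem?
  intro i
  rcases lt_or_ge i p.length with h | h
  · rw [List.getElem?_take_of_lt h, hσ i (by omega),
      List.getElem?_rotate (by simpa using h)]
    congr 1
    rw [Nat.add_comm i (σ % p.length), Nat.mod_add_mod]
  · rw [List.getElem?_eq_none (by simp; omega), List.getElem?_eq_none (by simp; omega)]

theorem force_eq {A : Type} {w y : List A} (hw : Primitive w) (rot d : ℕ)
    (hd : 0 < d) (hdvd : d ∣ w.length) (hle : w.length ≤ y.length)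
    (hu : y.take w.length = w.rotate rot)
    (perd : ∀ i, i + d < y.length → y[i]? = y[i + d]?) : w.length = d := by
  set u := w.rotate rot with hudef
  have hulen : u.length = w.length := List.length_rotate w rot
  have hperu : ∀ i, i + d < u.length → u[i]? = u[i + d]? := by
    intro i hi
    rw [hulen] at hi
    rw [← hu, List.getElem?_take_of_lt (by omega), List.getElem?_take_of_lt (by omega)]
    exact perd i (by omega)
  have hpow : u = wpow (u.take d) (w.length / d) := by
    apply per_wpow d hd _ u _ hperu
    rw [hulen, Nat.div_mul_cancel hdvd]
  have h1 : w.length / d = 1 := (hw.rotate rot).2 _ _ hpow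
  have h2 := Nat.mul_div_cancel' hdvd
  rw [h1, Nat.mul_one] at h2
  omega

/-- If `p` and `q` are non-conjugate primitive words and `y` is a factor of both `pᵐ`
and `qᵐ`, then `|y| ≤ |p| + |q|`. -/
theorem stmt19 (A : Type) (p q : List A)
    (hp : Primitive p) (hq : Primitive q) (hnc : ¬ Conjugate p q)
    (y : List A) (m : ℕ)
    (hyp : y <:+: wpow p m) (hyq : y <:+: wpow q m) :
    y.length ≤ p.length + q.length := by
  by_contra hcon
  push_neg at hcon
  have hap : 0 < p.length := List.length_pos_iff.2 hp.1
  have haq : 0 < q.length := List.length_pos_iff.2 hq.1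
  obtain ⟨σ, hσ, -⟩ := infix_rep hyp
  obtain ⟨τ, hτ, -⟩ := infix_rep hyq
  have pera : ∀ i, i + p.length < y.length → y[i]? = y[i + p.length]? := by
    intro i hi
    rw [hσ i (by omega), hσ (i + p.length) hi]
    congr 1
    rw [show σ + (i + p.length) = (σ + i) + p.length by ring, Nat.add_mod_right]
  have perb : ∀ i, i + q.length < y.length → y[i]? = y[i + q.length]? := by
    intro i hi
    rw [hτ i (by omega), hτ (i + q.length) hi]
    congr 1
    rw [show τ + (i + q.length) = (τ + i) + q.length by ring, Nat.add_mod_right]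
  set d := Nat.gcd p.length q.length with hddef
  have hd : 0 < d := Nat.gcd_pos_of_pos_left _ hap
  have perd : ∀ i, i + d < y.length → y[i]? = y[i + d]? :=
    fine_wilf_aux (fun i => y[i]?) y.length (p.length + q.length) p.length q.length
      le_rfl hap haq (by omega) pera perb
  have hup : y.take p.length = p.rotate (σ % p.length) :=
    take_eq_rotate hp.1 (by omega) hσ
  have huq : y.take q.length = q.rotate (τ % q.length) :=
    take_eq_rotate hq.1 (by omega) hτ
  have hpd : p.length = d :=
    force_eq hp _ d hd (Nat.gcd_dvd_left _ _) (by omega) hup perd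
  have hqd : q.length = d :=
    force_eq hq _ d hd (Nat.gcd_dvd_right _ _) (by omega) huq perd
  have hpq : p.length = q.length := by omega
  have hrot : p.rotate (σ % p.length) = q.rotate (τ % q.length) := by
    rw [← hup, ← huq, hpq]
  -- q = p.rotate c
  have hq1 : q = p.rotate (σ % p.length + (q.length - τ % q.length)) := by
    have h1 : (q.rotate (τ % q.length)).rotate (q.length - τ % q.length) = q := by
      rw [List.rotate_rotate,
        show τ % q.length + (q.length - τ % q.length) = q.length by
          have := Nat.mod_lt τ haq; omega,
        List.rotate_length]
    conv_lhs => rw [← h1, ← hrot, List.rotate_rotate]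
  set c := (σ % p.length + (q.length - τ % q.length)) % p.length with hcdef
  have hc : c < p.length := Nat.mod_lt _ hap
  have hq2 : q = p.rotate c := by rw [hcdef, List.rotate_mod, ← hq1]
  apply hnc
  refine ⟨p.take c, p.drop c, ?_, (List.take_append_drop c p).symm, ?_⟩
  · intro h
    have := congrArg List.length h
    simp at this
    omega
  · rw [hq2, List.rotate_eq_drop_append_take (le_of_lt hc)]
end
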